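/- arXiv:2407.17632 — 10 statements merged into one kernel-verified Lean document; each statement's English description precedes it below -/
import Mathlib

section
/- For any commutative ring A and any two GE₂-unimodular vectors u, v ∈ A², there exists a finite sequence u = w₀, w₁, …, wₙ = v of GE₂-unimodular vectors in A² such that for each i < n, either the 2×2 matrix with columns wᵢ and wᵢ₊₁ lies in GE₂(A), or wᵢ₊₁ = c·wᵢ for some unit c ∈ A^×. (Equivalently, the complex of GE₂-unimodular vectors Y₁(A²) → Y₀(A²) → ℤ → 0 is exact, i.e. H₀(Y_•(A²)) ≅ ℤ.) -/
open Matrix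

variable (A : Type*) [CommRing A]

/-- The elementary matrix `E₁₂(a) = [[1,a],[0,1]]` as an element of `GL₂(A)`. -/
def E12 (a : A) : GL (Fin 2) A :=
  ⟨!![1, a; 0, 1], !![1, -a; 0, 1],
    by rw [Matrix.mul_fin_two, Matrix.one_fin_two]; ring_nf,
    by rw [Matrix.mul_fin_two, Matrix.one_fin_two]; ring_nf⟩

/-- The elementary matrix `E₂₁(a) = [[1,0],[a,1]]` as an element of `GL₂(A)`. -/
def E21 (a : A) : GL (Fin 2) A :=
  ⟨!![1, 0; a, 1], !![1, 0; -a, 1],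
    by rw [Matrix.mul_fin_two, Matrix.one_fin_two]; ring_nf,
    by rw [Matrix.mul_fin_two, Matrix.one_fin_two]; ring_nf⟩

/-- `E₂(A)`: the subgroup of `GL₂(A)` generated by the elementary matrices. -/
def EE2 : Subgroup (GL (Fin 2) A) :=
  Subgroup.closure (Set.range (E12 A) ∪ Set.range (E21 A))

/-- `GE₂(A)`: the subgroup of `GL₂(A)` generated by the elementary and the
invertible diagonal matrices. -/
def GE2 : Subgroup (GL (Fin 2) A) :=
  Subgroup.closure (Set.range (E12 A) ∪ Set.range (E21 A) ∪
    {g : GL (Fin 2) A | ∃ u v : Aˣ, (g : Matrix (Fin 2) (Fin 2) A) = !![(u : A), 0; 0, (v : A)]})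

/-- `D(u) = diag(u, u⁻¹)` as an element of `GL₂(A)`. -/
def DU (u : Aˣ) : GL (Fin 2) A :=
  ⟨!![(u : A), 0; 0, ((u⁻¹ : Aˣ) : A)], !![((u⁻¹ : Aˣ) : A), 0; 0, (u : A)],
    by rw [Matrix.mul_fin_two, Matrix.one_fin_two]; simp,
    by rw [Matrix.mul_fin_two, Matrix.one_fin_two]; simp⟩

/-- `w = [[0,1],[-1,0]]` as an element of `GL₂(A)`. -/
def wU : GL (Fin 2) A :=
  ⟨!![0, 1; -1, 0], !![0, -1; 1, 0],
    by rw [Matrix.mul_fin_two, Matrix.one_fin_two]; ring_nf,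
    by rw [Matrix.mul_fin_two, Matrix.one_fin_two]; ring_nf⟩

/-- `g_z = [[0,1],[-1,z]]` as an element of `GL₂(A)`. -/
def gU (z : A) : GL (Fin 2) A :=
  ⟨!![0, 1; -1, z], !![z, -1; 1, 0],
    by rw [Matrix.mul_fin_two, Matrix.one_fin_two]; ring_nf,
    by rw [Matrix.mul_fin_two, Matrix.one_fin_two]; ring_nf⟩

/-- `h_z = [[1,z⁻¹],[0,1]]` as an element of `GL₂(A)`, for a unit `z`. -/
def hU (z : Aˣ) : GL (Fin 2) A := E12 A ((z⁻¹ : Aˣ) : A)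

variable {A}

lemma E12_mem (a : A) : E12 A a ∈ EE2 A :=
  Subgroup.subset_closure (Or.inl ⟨a, rfl⟩)

lemma E21_mem (a : A) : E21 A a ∈ EE2 A :=
  Subgroup.subset_closure (Or.inr ⟨a, rfl⟩)

lemma wU_mem : wU A ∈ EE2 A := by
  have : wU A = E12 A 1 * E21 A (-1) * E12 A 1 := by
    apply Units.ext
    show (!![0, 1; -1, 0] : Matrix (Fin 2) (Fin 2) A) =
      (!![1,1;0,1] : Matrix (Fin 2) (Fin 2) A) * !![1,0;-1,1] * !![1,1;0,1]
    rw [Matrix.mul_fin_two, Matrix.mul_fin_two]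
    ext i j; fin_cases i <;> fin_cases j <;> simp
  rw [this]
  exact mul_mem (mul_mem (E12_mem 1) (E21_mem (-1))) (E12_mem 1)

lemma gU_mem (z : A) : gU A z ∈ EE2 A := by
  have : gU A z = wU A * E12 A (-z) := by
    apply Units.ext
    show (!![0, 1; -1, z] : Matrix (Fin 2) (Fin 2) A) =
      (!![0,1;-1,0] : Matrix (Fin 2) (Fin 2) A) * !![1,-z;0,1]
    rw [Matrix.mul_fin_two]
    ext i j; fin_cases i <;> fin_cases j <;> simp
  rw [this]
  exact mul_mem wU_mem (E12_mem (-z))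

lemma hU_mem (z : Aˣ) : hU A z ∈ EE2 A := E12_mem _

lemma DU_mem (u : Aˣ) : DU A u ∈ EE2 A := by
  have : DU A u = E12 A (u : A) * E21 A (-((u⁻¹ : Aˣ) : A)) * E12 A (u : A) *
      (E12 A (-1) * E21 A 1 * E12 A (-1)) := by
    apply Units.ext
    show (!![(u : A), 0; 0, ((u⁻¹ : Aˣ) : A)] : Matrix (Fin 2) (Fin 2) A) =
      (!![1,(u:A);0,1] : Matrix (Fin 2) (Fin 2) A) * !![1,0;-((u⁻¹:Aˣ):A),1] *
      !![1,(u:A);0,1] * (!![1,-1;0,1] * !![1,0;1,1] * !![1,-1;0,1])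
    rw [Matrix.mul_fin_two, Matrix.mul_fin_two, Matrix.mul_fin_two, Matrix.mul_fin_two,
      Matrix.mul_fin_two]
    ext i j; fin_cases i <;> fin_cases j <;> simp
  rw [this]
  exact mul_mem (mul_mem (mul_mem (E12_mem _) (E21_mem _)) (E12_mem _))
    (mul_mem (mul_mem (E12_mem _) (E21_mem _)) (E12_mem _))

variable (A)

/-- The 2×2 matrix with columns `u` and `v`. -/
def colMat (u v : Fin 2 → A) : Matrix (Fin 2) (Fin 2) A := !![u 0, v 0; u 1, v 1]

/-- A 2×2 matrix "lies in `GE₂(A)`" if it is the underlying matrix of an element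
of the subgroup `GE₂(A)` of `GL₂(A)`. -/
def MatInGE2 (m : Matrix (Fin 2) (Fin 2) A) : Prop :=
  ∃ g ∈ GE2 A, (g : Matrix (Fin 2) (Fin 2) A) = m

/-- A vector `u ∈ A²` is `GE₂`-unimodular if it is the first column of (the matrix of)
an element of `GE₂(A)`. -/
def IsGE2Unimodular (u : Fin 2 → A) : Prop :=
  ∃ v : Fin 2 → A, MatInGE2 A (colMat A u v)

/-!
Write `e₀ = (1, 0)` and `e₁ = (0, 1)`. A vector is `GE₂`-unimodular exactly when it is `g e₀` for
some `g ∈ GE₂(A)`, and adjacency (forming a matrix in `GE₂(A)`, or differing by a unit) is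
`GE₂`-equivariant. Hence the `g ∈ GE₂(A)` with `g e₀` connected to `e₀` are closed under products
and inverses. They include the generators: `E₁₂(a)` fixes `e₀`, `E₂₁(a) e₀ = (1, a)` is adjacent
to `e₁`, which is adjacent to `e₀`, and a diagonal matrix scales `e₀` by a unit. So every
unimodular vector is connected to `e₀`.
-/
namespace Relation.ReflTransGen

variable {α : Type*} {r : α → α → Prop} {a b : α}

theorem exists_fin_chain (h : ReflTransGen r a b) :
    ∃ (n : ℕ) (w : Fin (n + 1) → α), w 0 = a ∧ w (Fin.last n) = b ∧
      (∀ i, ReflTransGen r a (w i)) ∧ ∀ i : Fin n, r (w i.castSucc) (w i.succ) := by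
  induction h with
  | refl => exact ⟨0, fun _ => a, rfl, rfl, fun _ => .refl, fun i => i.elim0⟩
  | @tail b c _ hbc ih =>
    obtain ⟨n, w, h0, hlast, hreach, hstep⟩ := ih
    refine ⟨n + 1, Fin.snoc w c, (Fin.snoc_castSucc (i := 0) ..).trans h0, Fin.snoc_last ..,
      ?_, ?_⟩
    · refine Fin.lastCases ?_ fun i => ?_
      · rw [Fin.snoc_last]
        exact (hlast ▸ hreach (Fin.last n)).tail hbc
      · rw [Fin.snoc_castSucc]
        exact hreach i
    · refine Fin.lastCases ?_ fun i => ?_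
      · rw [Fin.succ_last, Fin.snoc_last, Fin.snoc_castSucc, hlast]
        exact hbc
      · rw [Fin.succ_castSucc, Fin.snoc_castSucc, Fin.snoc_castSucc]
        exact hstep i

end Relation.ReflTransGen

def diagGL (a b : Aˣ) : GL (Fin 2) A :=
  ⟨!![(a : A), 0; 0, (b : A)], !![((a⁻¹ : Aˣ) : A), 0; 0, ((b⁻¹ : Aˣ) : A)],
    by simp [one_fin_two], by simp [one_fin_two]⟩

variable {A}

theorem diagGL_mem_GE2 (a b : Aˣ) : diagGL A a b ∈ GE2 A :=
  Subgroup.subset_closure (Or.inr ⟨a, b, rfl⟩)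

theorem EE2_le_GE2 : EE2 A ≤ GE2 A :=
  Subgroup.closure_mono fun _ => Or.inl

theorem MatInGE2.mul {m m' : Matrix (Fin 2) (Fin 2) A} (h : MatInGE2 A m)
    (h' : MatInGE2 A m') : MatInGE2 A (m * m') := by
  obtain ⟨g, hg, rfl⟩ := h
  obtain ⟨g', hg', rfl⟩ := h'
  exact ⟨g * g', mul_mem hg hg', Units.val_mul g g'⟩

theorem matInGE2_swap : MatInGE2 A !![0, 1; 1, 0] :=
  ⟨wU A * diagGL A (-1) 1, mul_mem (EE2_le_GE2 wU_mem) (diagGL_mem_GE2 _ _), by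
    simp [wU, diagGL]⟩

theorem colMat_swap (x y : Fin 2 → A) : colMat A y x = colMat A x y * !![0, 1; 1, 0] := by
  simp [colMat]

theorem colMat_mulVec (m : Matrix (Fin 2) (Fin 2) A) (x y : Fin 2 → A) :
    colMat A (m *ᵥ x) (m *ᵥ y) = m * colMat A x y := by
  ext i j
  fin_cases i <;> fin_cases j <;> simp [colMat, mulVec, mul_apply, dotProduct, Fin.sum_univ_two]

theorem colMat_mulVec_e0 (x y : Fin 2 → A) : colMat A x y *ᵥ ![1, 0] = x := by
  ext i
  fin_cases i <;> simp [colMat, mulVec, dotProduct, Fin.sum_univ_two]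

theorem isGE2Unimodular_iff {x : Fin 2 → A} :
    IsGE2Unimodular A x ↔ ∃ g ∈ GE2 A, (g : Matrix (Fin 2) (Fin 2) A) *ᵥ ![1, 0] = x := by
  constructor
  · rintro ⟨y, g, hg, hgxy⟩
    exact ⟨g, hg, by rw [hgxy, colMat_mulVec_e0]⟩
  · rintro ⟨g, hg, rfl⟩
    refine ⟨(g : Matrix (Fin 2) (Fin 2) A) *ᵥ ![0, 1], g, hg, ?_⟩
    rw [colMat_mulVec]
    simp [colMat, ← one_fin_two]

variable (A) in
def GE2Adj (x y : Fin 2 → A) : Prop :=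
  MatInGE2 A (colMat A x y) ∨ ∃ c : Aˣ, y = fun j => (c : A) * x j

theorem GE2Adj.symm {x y : Fin 2 → A} (h : GE2Adj A x y) : GE2Adj A y x := by
  rcases h with h | ⟨c, rfl⟩
  · exact .inl (colMat_swap x y ▸ h.mul matInGE2_swap)
  · exact .inr ⟨c⁻¹, by simp⟩

instance : Std.Symm (GE2Adj A) := ⟨fun _ _ => GE2Adj.symm⟩

theorem GE2Adj.mulVec {x y : Fin 2 → A} {g : GL (Fin 2) A} (hg : g ∈ GE2 A)
    (h : GE2Adj A x y) :
    GE2Adj A ((g : Matrix (Fin 2) (Fin 2) A) *ᵥ x) ((g : Matrix (Fin 2) (Fin 2) A) *ᵥ y) := by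
  rcases h with h | ⟨c, rfl⟩
  · exact .inl (colMat_mulVec _ x _ ▸ MatInGE2.mul ⟨g, hg, rfl⟩ h)
  · exact .inr ⟨c, mulVec_smul _ (c : A) x⟩

theorem GE2Adj.isGE2Unimodular {x y : Fin 2 → A} (h : GE2Adj A x y)
    (hx : IsGE2Unimodular A x) : IsGE2Unimodular A y := by
  rcases h with h | ⟨c, rfl⟩
  · exact ⟨x, colMat_swap x y ▸ h.mul matInGE2_swap⟩
  · obtain ⟨g, hg, rfl⟩ := isGE2Unimodular_iff.mp hx
    refine isGE2Unimodular_iff.mpr ⟨g * diagGL A c 1, mul_mem hg (diagGL_mem_GE2 c 1), ?_⟩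
    have hdiag : (diagGL A c 1 : Matrix (Fin 2) (Fin 2) A) *ᵥ ![1, 0] = (c : A) • ![1, 0] := by
      ext i
      fin_cases i <;> simp [diagGL]
    rw [Units.val_mul, ← mulVec_mulVec, hdiag, mulVec_smul]
    rfl

theorem IsGE2Unimodular.of_reflTransGen {x y : Fin 2 → A}
    (h : Relation.ReflTransGen (GE2Adj A) x y) (hx : IsGE2Unimodular A x) :
    IsGE2Unimodular A y := by
  induction h with
  | refl => exact hx
  | tail _ hyz ih => exact hyz.isGE2Unimodular ih

theorem reflTransGen_GE2Adj_mulVec {x y : Fin 2 → A} {g : GL (Fin 2) A} (hg : g ∈ GE2 A)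
    (h : Relation.ReflTransGen (GE2Adj A) x y) :
    Relation.ReflTransGen (GE2Adj A) ((g : Matrix (Fin 2) (Fin 2) A) *ᵥ x)
      ((g : Matrix (Fin 2) (Fin 2) A) *ᵥ y) :=
  h.lift (_ *ᵥ ·) fun _ _ => GE2Adj.mulVec hg

theorem reflTransGen_GE2Adj_mulVec_e0_of_mem_generators {g : GL (Fin 2) A}
    (hg : g ∈ Set.range (E12 A) ∪ Set.range (E21 A) ∪
      {g : GL (Fin 2) A | ∃ u v : Aˣ,
        (g : Matrix (Fin 2) (Fin 2) A) = !![(u : A), 0; 0, (v : A)]}) :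
    Relation.ReflTransGen (GE2Adj A) ((g : Matrix (Fin 2) (Fin 2) A) *ᵥ ![1, 0]) ![1, 0] := by
  rcases hg with (⟨a, rfl⟩ | ⟨a, rfl⟩) | ⟨a, b, hab⟩
  · convert Relation.ReflTransGen.refl
    ext i; fin_cases i <;> simp [E12]
  · have hcol : GE2Adj A ((E21 A a : Matrix (Fin 2) (Fin 2) A) *ᵥ ![1, 0]) ![0, 1] :=
      .inl ⟨E21 A a, EE2_le_GE2 (E21_mem a), by
        ext i j; fin_cases i <;> fin_cases j <;> simp [E21, colMat]⟩
    have hbasis : GE2Adj A ![1, 0] ![0, 1] :=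
      .inl ⟨1, one_mem _, by simp [colMat, ← one_fin_two]⟩
    exact .tail (.single hcol) hbasis.symm
  · refine .single (.inr ⟨a⁻¹, ?_⟩)
    ext i; fin_cases i <;> simp [hab]

theorem reflTransGen_GE2Adj_mulVec_e0 {g : GL (Fin 2) A} (hg : g ∈ GE2 A) :
    Relation.ReflTransGen (GE2Adj A) ((g : Matrix (Fin 2) (Fin 2) A) *ᵥ ![1, 0]) ![1, 0] := by
  induction hg using Subgroup.closure_induction with
  | mem g hg => exact reflTransGen_GE2Adj_mulVec_e0_of_mem_generators hg
  | one => simpa using Relation.ReflTransGen.refl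
  | mul g h hg hh ihg ihh =>
    rw [Units.val_mul, ← mulVec_mulVec]
    exact (reflTransGen_GE2Adj_mulVec hg ihh).trans ihg
  | inv g hg ih =>
    have := reflTransGen_GE2Adj_mulVec (inv_mem hg) ih
    rw [mulVec_mulVec, ← Units.val_mul, inv_mul_cancel, Units.val_one, one_mulVec] at this
    exact symm this

/-- For any two `GE₂`-unimodular vectors `u, v` there is a chain
`u = w₀, w₁, …, wₙ = v` of `GE₂`-unimodular vectors such that consecutive members either
form a matrix in `GE₂(A)` or differ by a unit scalar. -/
theorem connectedness_of_GE2_unimodular_vectors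
    (u v : Fin 2 → A) (hu : IsGE2Unimodular A u) (hv : IsGE2Unimodular A v) :
    ∃ (n : ℕ) (w : Fin (n + 1) → Fin 2 → A),
      w 0 = u ∧ w (Fin.last n) = v ∧ (∀ i, IsGE2Unimodular A (w i)) ∧
      ∀ i : Fin n,
        MatInGE2 A (colMat A (w (Fin.castSucc i)) (w i.succ)) ∨
        ∃ c : Aˣ, w i.succ = fun j => (c : A) * w (Fin.castSucc i) j := by
  have huv : Relation.ReflTransGen (GE2Adj A) u v := by
    obtain ⟨g, hg, rfl⟩ := isGE2Unimodular_iff.mp hu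
    obtain ⟨h, hh, rfl⟩ := isGE2Unimodular_iff.mp hv
    exact (reflTransGen_GE2Adj_mulVec_e0 hg).trans (symm (reflTransGen_GE2Adj_mulVec_e0 hh))
  obtain ⟨n, w, h0, hlast, hreach, hadj⟩ := huv.exists_fin_chain
  exact ⟨n, w, h0, hlast, fun i => .of_reflTransGen (hreach i) hu, hadj⟩
end

section
/- For any commutative ring A, the map from the additive group of A to the abelianization E₂(A)^ab sending x to the class of the elementary matrix E₁₂(x) is a surjective group homomorphism whose kernel contains M; consequently it induces a surjective homomorphism A/M → H₁(E₂(A),ℤ). -/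
open Matrix

variable (A : Type*) [CommRing A]

variable {A}

variable (A)

/-- The subgroup `M ⊆ A` generated by the elements `x(a²−1)` and `3(b+1)(c+1)`,
for `x ∈ A` and units `a, b, c`. -/
def Msub : AddSubgroup A :=
  AddSubgroup.closure
    ({z : A | ∃ (x : A) (a : Aˣ), z = x * ((a : A) ^ 2 - 1)} ∪
     {z : A | ∃ b c : Aˣ, z = 3 * ((b : A) + 1) * ((c : A) + 1)})

/-- The canonical map `A → E₂(A)ᵃᵇ = H₁(E₂(A), ℤ)`, `x ↦ [E₁₂(x)]`. -/
def elemToAb (x : A) : Abelianization ↥(EE2 A) :=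
  Abelianization.of ⟨E12 A x, E12_mem x⟩

-- ============ auxiliary ============
namespace E2Aux

variable {A}

lemma gl_ext {g h : GL (Fin 2) A}
    (H : (g : Matrix (Fin 2) (Fin 2) A) = (h : Matrix (Fin 2) (Fin 2) A)) : g = h :=
  Units.ext H

lemma E12_val (a : A) : ((E12 A a : GL (Fin 2) A) : Matrix (Fin 2) (Fin 2) A) = !![1, a; 0, 1] := rfl
lemma E21_val (a : A) : ((E21 A a : GL (Fin 2) A) : Matrix (Fin 2) (Fin 2) A) = !![1, 0; a, 1] := rfl

lemma E12_mul (x y : A) : E12 A x * E12 A y = E12 A (x + y) := by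
  apply gl_ext
  rw [Units.val_mul, E12_val, E12_val, E12_val, Matrix.mul_fin_two]
  ring_nf

lemma E12_zero : E12 A (0 : A) = 1 := by
  apply gl_ext
  rw [E12_val, Units.val_one, Matrix.one_fin_two]

/-- w(a) = E12(a) E21(-a⁻¹) E12(a) = [[0,a],[-a⁻¹,0]]. -/
lemma wa_val (a ai : A) (h : a * ai = 1) :
    ((E12 A a * E21 A (-ai) * E12 A a : GL (Fin 2) A) : Matrix (Fin 2) (Fin 2) A)
      = !![0, a; -ai, 0] := by
  rw [Units.val_mul, Units.val_mul, E12_val, E21_val, Matrix.mul_fin_two, Matrix.mul_fin_two]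
  ext i j
  fin_cases i <;> fin_cases j <;> simp <;>
    first
      | ring1
      | linear_combination h
      | linear_combination -h
      | linear_combination a * h
      | linear_combination -a * h

variable (A) in
def wGL : GL (Fin 2) A := E12 A 1 * E21 A (-1) * E12 A 1

lemma w_val : ((wGL A : GL (Fin 2) A) : Matrix (Fin 2) (Fin 2) A) = !![0, 1; -1, 0] := by
  have := wa_val (A := A) 1 1 (by ring)
  simpa [wGL] using this

lemma w_mem : wGL A ∈ EE2 A :=
  mul_mem (mul_mem (E12_mem 1) (E21_mem (-1))) (E12_mem 1)

lemma w_conj (x : A) : wGL A * E12 A x = E21 A (-x) * wGL A := by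
  apply gl_ext
  rw [Units.val_mul, Units.val_mul, w_val, E12_val, E21_val, Matrix.mul_fin_two,
    Matrix.mul_fin_two]
  ext i j
  fin_cases i <;> fin_cases j <;> simp <;> ring

def DGL (a : Aˣ) : GL (Fin 2) A :=
  E12 A (a : A) * E21 A (-((a⁻¹ : Aˣ) : A)) * E12 A (a : A)
    * (E12 A (-1) * E21 A 1 * E12 A (-1))

lemma D_mem (a : Aˣ) : DGL a ∈ EE2 A :=
  mul_mem
    (mul_mem (mul_mem (E12_mem _) (E21_mem _)) (E12_mem _))
    (mul_mem (mul_mem (E12_mem _) (by simpa using E21_mem (A := A) 1)) (E12_mem _))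

lemma D_val (a : Aˣ) :
    ((DGL a : GL (Fin 2) A) : Matrix (Fin 2) (Fin 2) A)
      = !![(a : A), 0; 0, ((a⁻¹ : Aˣ) : A)] := by
  have h1 := wa_val (A := A) (a : A) ((a⁻¹ : Aˣ) : A) (by exact_mod_cast Units.mul_inv a)
  have h2 : ((E12 A (-1) * E21 A 1 * E12 A (-1) : GL (Fin 2) A) :
      Matrix (Fin 2) (Fin 2) A) = !![0, -1; 1, 0] := by
    have := wa_val (A := A) (-1) (-1) (by ring)
    simpa using this
  rw [DGL, Units.val_mul, h1, h2, Matrix.mul_fin_two]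
  ext i j
  fin_cases i <;> fin_cases j <;> simp

lemma D_mul (u v : Aˣ) : DGL (A := A) u * DGL v = DGL (u * v) := by
  apply gl_ext
  rw [Units.val_mul, D_val, D_val, D_val, Matrix.mul_fin_two, _root_.mul_inv_rev,
    Units.val_mul, Units.val_mul]
  ext i j
  fin_cases i <;> fin_cases j <;> simp <;> ring

lemma D_conj (a : Aˣ) (x : A) :
    DGL a * E12 A x = E12 A ((a : A) ^ 2 * x) * DGL a := by
  have h : (a : A) * ((a⁻¹ : Aˣ) : A) = 1 := by exact_mod_cast Units.mul_inv a
  apply gl_ext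
  rw [Units.val_mul, Units.val_mul, D_val, E12_val, E12_val, Matrix.mul_fin_two,
    Matrix.mul_fin_two]
  ext i j
  fin_cases i <;> fin_cases j <;> simp <;>
    first
      | ring1
      | linear_combination ((a : A) * x) * h
      | linear_combination (-(a : A) * x) * h

-- ============ abelianization ============

lemma e_add (x y : A) : elemToAb A (x + y) = elemToAb A x * elemToAb A y := by
  unfold elemToAb
  rw [← _root_.map_mul]
  congr 1
  exact Subtype.ext (E12_mul x y).symm

lemma e_zero : elemToAb A 0 = 1 := by
  unfold elemToAb
  rw [show (⟨E12 A 0, E12_mem 0⟩ : ↥(EE2 A)) = 1 from Subtype.ext E12_zero, _root_.map_one]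

lemma e_neg (x : A) : elemToAb A (-x) = (elemToAb A x)⁻¹ := by
  apply eq_inv_of_mul_eq_one_left
  rw [← e_add, neg_add_cancel, e_zero]

variable (A) in
def eHom : A →+ Additive (Abelianization ↥(EE2 A)) :=
  AddMonoidHom.mk' (fun x => Additive.ofMul (elemToAb A x))
    (fun x y => congrArg Additive.ofMul (e_add x y))

lemma eHom_apply (x : A) : eHom A x = Additive.ofMul (elemToAb A x) := rfl

lemma of_conj (g h : ↥(EE2 A)) :
    Abelianization.of (g * h * g⁻¹) = Abelianization.of h := by
  rw [_root_.map_mul, _root_.map_mul, _root_.map_inv, mul_comm (Abelianization.of g) (Abelianization.of h),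
    mul_inv_cancel_right]

lemma e21_ab (y : A) :
    Abelianization.of (⟨E21 A y, E21_mem y⟩ : ↥(EE2 A)) = elemToAb A (-y) := by
  have hw : wGL A * E12 A (-y) * (wGL A)⁻¹ = E21 A y := by
    rw [w_conj, neg_neg, mul_inv_cancel_right]
  have hsub : (⟨E21 A y, E21_mem y⟩ : ↥(EE2 A)) =
      ⟨wGL A, w_mem⟩ * ⟨E12 A (-y), E12_mem _⟩ * (⟨wGL A, w_mem⟩)⁻¹ :=
    Subtype.ext hw.symm
  rw [hsub, of_conj]
  rfl

lemma e_sq (a : Aˣ) (x : A) : elemToAb A ((a : A) ^ 2 * x) = elemToAb A x := by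
  have h : E12 A ((a : A) ^ 2 * x) = DGL a * E12 A x * (DGL a)⁻¹ := by
    rw [D_conj, mul_inv_cancel_right]
  have hsub : (⟨E12 A ((a : A) ^ 2 * x), E12_mem _⟩ : ↥(EE2 A)) =
      ⟨DGL a, D_mem a⟩ * ⟨E12 A x, E12_mem _⟩ * (⟨DGL a, D_mem a⟩)⁻¹ :=
    Subtype.ext h
  unfold elemToAb
  rw [hsub, of_conj]

lemma D_ab (a : Aˣ) :
    Abelianization.of (⟨DGL a, D_mem a⟩ : ↥(EE2 A)) =
      elemToAb A (2 * (a : A) + ((a⁻¹ : Aˣ) : A) - 3) := by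
  have hsub : (⟨DGL a, D_mem a⟩ : ↥(EE2 A)) =
      (⟨E12 A (a : A), E12_mem _⟩ * ⟨E21 A (-((a⁻¹ : Aˣ) : A)), E21_mem _⟩
        * ⟨E12 A (a : A), E12_mem _⟩)
      * (⟨E12 A (-1), E12_mem _⟩ * ⟨E21 A 1, E21_mem _⟩ * ⟨E12 A (-1), E12_mem _⟩) :=
    Subtype.ext rfl
  rw [hsub, _root_.map_mul, _root_.map_mul, _root_.map_mul, _root_.map_mul, _root_.map_mul]
  rw [e21_ab, e21_ab, neg_neg]
  show elemToAb A _ * elemToAb A _ * elemToAb A _ * (elemToAb A _ * elemToAb A _ * elemToAb A _) = _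
  rw [← e_add, ← e_add, ← e_add, ← e_add, ← e_add]
  congr 1
  ring

lemma k1 (x : A) (a : Aˣ) : eHom A (x * ((a : A) ^ 2 - 1)) = 0 := by
  have h : eHom A (x * ((a : A) ^ 2 - 1)) + eHom A x = eHom A x := by
    rw [← map_add]
    have harg : x * ((a : A) ^ 2 - 1) + x = (a : A) ^ 2 * x := by ring
    rw [harg, eHom_apply, eHom_apply, e_sq]
  exact add_eq_right.mp h

lemma k2 (u : Aˣ) : eHom A ((u⁻¹ : Aˣ) : A) = eHom A ((u : A)) := by
  have hu : ((u⁻¹ : Aˣ) : A) * (u : A) = 1 := by exact_mod_cast Units.inv_mul u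
  have harg : -((u⁻¹ : Aˣ) : A) * ((u : A) ^ 2 - 1) = ((u⁻¹ : Aˣ) : A) - (u : A) := by
    linear_combination (-(u : A)) * hu
  have h := k1 (-((u⁻¹ : Aˣ) : A)) u
  rw [harg, map_sub, sub_eq_zero] at h
  exact h

lemma D_ab_mul (u v : Aˣ) :
    elemToAb A (2 * (u : A) + ((u⁻¹ : Aˣ) : A) - 3)
      * elemToAb A (2 * (v : A) + ((v⁻¹ : Aˣ) : A) - 3)
    = elemToAb A (2 * ((u * v : Aˣ) : A) + (((u * v)⁻¹ : Aˣ) : A) - 3) := by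
  rw [← D_ab, ← D_ab, ← D_ab, ← _root_.map_mul]
  congr 1
  exact Subtype.ext (D_mul u v)

lemma k3 (u v : Aˣ) : eHom A (3 * ((u : A) - 1) * ((v : A) - 1)) = 0 := by
  have hD : eHom A (2 * (u : A) + ((u⁻¹ : Aˣ) : A) - 3)
      + eHom A (2 * (v : A) + ((v⁻¹ : Aˣ) : A) - 3)
      = eHom A (2 * ((u * v : Aˣ) : A) + (((u * v)⁻¹ : Aˣ) : A) - 3) := by
    have h := congrArg Additive.ofMul (D_ab_mul u v)
    simpa [eHom_apply, ← ofMul_mul] using h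
  have h1 : eHom A (((u⁻¹ : Aˣ) : A) - (u : A)) = 0 := by
    rw [map_sub, k2, sub_self]
  have h2 : eHom A (((v⁻¹ : Aˣ) : A) - (v : A)) = 0 := by
    rw [map_sub, k2, sub_self]
  have h3 : eHom A (((u * v : Aˣ) : A) - (((u * v)⁻¹ : Aˣ) : A)) = 0 := by
    rw [map_sub, k2 (u * v), sub_self]
  have hsum : (3 : A) * ((u : A) - 1) * ((v : A) - 1) =
      -((2 * (u : A) + ((u⁻¹ : Aˣ) : A) - 3) + (2 * (v : A) + ((v⁻¹ : Aˣ) : A) - 3)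
          - (2 * ((u * v : Aˣ) : A) + (((u * v)⁻¹ : Aˣ) : A) - 3))
        + (((u⁻¹ : Aˣ) : A) - (u : A)) + (((v⁻¹ : Aˣ) : A) - (v : A))
        + (((u * v : Aˣ) : A) - (((u * v)⁻¹ : Aˣ) : A)) := by
    push_cast
    ring
  rw [hsum, map_add, map_add, map_add, map_neg, map_sub, map_add, hD, sub_self, neg_zero,
    h1, h2, h3]
  simp

lemma ker_M {m : A} (hm : m ∈ Msub A) : elemToAb A m = 1 := by
  have key : eHom A m = 0 := by
    refine AddSubgroup.closure_induction ?_ ?_ ?_ ?_ hm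
    · rintro z (⟨x, a, rfl⟩ | ⟨b, c, rfl⟩)
      · exact k1 x a
      · have harg : (3 : A) * ((b : A) + 1) * ((c : A) + 1) =
            3 * (((-b : Aˣ) : A) - 1) * (((-c : Aˣ) : A) - 1) := by
          push_cast
          ring
        rw [harg]
        exact k3 (-b) (-c)
    · exact map_zero _
    · intro x y _ _ hx hy
      rw [map_add, hx, hy, add_zero]
    · intro x _ hx
      rw [map_neg, hx, neg_zero]
  have := congrArg Additive.toMul key
  simpa [eHom_apply] using this

lemma e_surj : Function.Surjective (elemToAb A) := by
  intro z
  refine QuotientGroup.induction_on z fun g => ?_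
  obtain ⟨y, hy⟩ := g
  refine Subgroup.closure_induction
    (p := fun y hy => ∃ x, elemToAb A x = Abelianization.of (⟨y, hy⟩ : ↥(EE2 A)))
    ?_ ?_ ?_ ?_ hy
  · rintro g (⟨a, rfl⟩ | ⟨a, rfl⟩)
    · exact ⟨a, rfl⟩
    · exact ⟨-a, (e21_ab a).symm⟩
  · exact ⟨0, by rw [e_zero]; exact (_root_.map_one _).symm⟩
  · rintro g h hg hh ⟨x1, hx1⟩ ⟨x2, hx2⟩
    exact ⟨x1 + x2, by rw [e_add, hx1, hx2, ← _root_.map_mul]; rfl⟩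
  · rintro g hg ⟨x1, hx1⟩
    exact ⟨-x1, by rw [e_neg, hx1, ← _root_.map_inv]; rfl⟩

end E2Aux

open E2Aux

/-- The map `x ↦ [E₁₂(x)] ∈ E₂(A)ᵃᵇ = H₁(E₂(A), ℤ)` is a surjective
group homomorphism whose kernel contains `M`; consequently it induces a surjective
homomorphism `A/M → H₁(E₂(A), ℤ)`. -/
theorem elemToAb_surjective_hom_and_induced
    (A : Type*) [CommRing A] :
    (∀ x y : A, elemToAb A (x + y) = elemToAb A x * elemToAb A y) ∧
    Function.Surjective (elemToAb A) ∧
    (∀ m ∈ Msub A, elemToAb A m = 1) ∧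
    ∃ ψ : A ⧸ Msub A →+ Additive (Abelianization ↥(EE2 A)),
      Function.Surjective ψ ∧
      ∀ x : A, ψ (QuotientAddGroup.mk x) = Additive.ofMul (elemToAb A x) := by
  refine ⟨e_add, e_surj, fun m hm => ker_M hm, ?_⟩
  have hker : ∀ m ∈ Msub A, eHom A m = 0 := by
    intro m hm
    rw [eHom_apply, ker_M hm]
    rfl
  refine ⟨QuotientAddGroup.lift (Msub A) (eHom A) hker, ?_, fun x => rfl⟩
  · intro z
    obtain ⟨x, hx⟩ := e_surj (Additive.toMul z)
    exact ⟨QuotientAddGroup.mk x, by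
      show eHom A x = z
      rw [eHom_apply, hx]
      rfl⟩
end

section
/- Let A be a commutative ring that is universal for GE₂, i.e. the group K₂(2,A) is generated by the Steinberg symbols {v,u}, u, v ∈ A^×. Then the map x ↦ class of E₁₂(x) induces a group isomorphism A/M ≅ E₂(A)^ab ≅ H₁(E₂(A),ℤ). -/
open Matrix

variable (A : Type*) [CommRing A]

variable {A}

variable (A)

namespace Steinberg2


/-- `w₁₂(u)` as a word in the free group on the generators `x₁₂(r) = inl r`,
`x₂₁(r) = inr r`. -/
def fw12 (u : Aˣ) : FreeGroup (A ⊕ A) :=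
  FreeGroup.of (Sum.inl (u : A)) * FreeGroup.of (Sum.inr (-((u⁻¹ : Aˣ) : A))) *
    FreeGroup.of (Sum.inl (u : A))

/-- `w₂₁(u)` as a word in the free group on the generators. -/
def fw21 (u : Aˣ) : FreeGroup (A ⊕ A) :=
  FreeGroup.of (Sum.inr (u : A)) * FreeGroup.of (Sum.inl (-((u⁻¹ : Aˣ) : A))) *
    FreeGroup.of (Sum.inr (u : A))

/-- The Steinberg relations for `St(2,A)`. -/
def StRels : Set (FreeGroup (A ⊕ A)) :=
  {r | ∃ x y : A, r = FreeGroup.of (Sum.inl x) * FreeGroup.of (Sum.inl y) *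
        (FreeGroup.of (Sum.inl (x + y)))⁻¹} ∪
  {r | ∃ x y : A, r = FreeGroup.of (Sum.inr x) * FreeGroup.of (Sum.inr y) *
        (FreeGroup.of (Sum.inr (x + y)))⁻¹} ∪
  {r | ∃ (u : Aˣ) (x : A), r = fw12 A u * FreeGroup.of (Sum.inr x) * (fw12 A u)⁻¹ *
        (FreeGroup.of (Sum.inl (-(u : A) ^ 2 * x)))⁻¹} ∪
  {r | ∃ (u : Aˣ) (x : A), r = fw21 A u * FreeGroup.of (Sum.inl x) * (fw21 A u)⁻¹ *
        (FreeGroup.of (Sum.inr (-(u : A) ^ 2 * x)))⁻¹}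

/-- The rank two Steinberg group `St(2,A)`. -/
def St2 : Type _ := PresentedGroup (StRels A)

instance : Group (St2 A) := by unfold St2; infer_instance

/-- The generator `x₁₂(r)` of `St(2,A)`. -/
def stx12 (r : A) : St2 A := PresentedGroup.of (Sum.inl r)

/-- The generator `x₂₁(r)` of `St(2,A)`. -/
def stx21 (r : A) : St2 A := PresentedGroup.of (Sum.inr r)

/-- `w₁₂(u) ∈ St(2,A)`. -/
def stw12 (u : Aˣ) : St2 A := stx12 A (u : A) * stx21 A (-((u⁻¹ : Aˣ) : A)) * stx12 A (u : A)

/-- `h₁₂(u) := w₁₂(u)w₁₂(−1) ∈ St(2,A)`. -/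
def sth12 (u : Aˣ) : St2 A := stw12 A u * stw12 A (-1)

/-- The Steinberg symbol `{v,u} := h₁₂(uv)h₁₂(u)⁻¹h₁₂(v)⁻¹ ∈ St(2,A)`. -/
def stSymbol (v u : Aˣ) : St2 A := sth12 A (u * v) * (sth12 A u)⁻¹ * (sth12 A v)⁻¹

end Steinberg2

/-!
In any abelian quotient `f` of `St(2,A)`, conjugating by `w₁₂(1)` gives `x₂₁(r) ≡ x₁₂(-r)`, and
conjugating by `w₂₁(a)` gives `x₁₂(a²x) ≡ x₁₂(x)`. Hence `f ∘ x₁₂` kills every `x(a²-1)`, and the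
symbol `{v,u}` becomes `x₁₂(s)` with `s ≡ 3(1-u)(1-v)` modulo these; so if `f` kills the symbols,
`f ∘ x₁₂` factors through `A/M`. Conversely `x₁₂(r) ↦ r`, `x₂₁(r) ↦ -r` respects the Steinberg
relations modulo `M` and kills the symbols, i.e. `K₂(2,A)` by universality; as `St(2,A) → E₂(A)` is
onto, it descends to `E₂(A)ᵃᵇ → A/M`, inverse to `x ↦ [E₁₂(x)]`.
-/

variable {A}

lemma mul_sq_sub_one_mem_Msub (x : A) (a : Aˣ) : x * ((a : A) ^ 2 - 1) ∈ Msub A :=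
  AddSubgroup.subset_closure (Or.inl ⟨x, a, rfl⟩)

lemma three_mul_add_one_mul_add_one_mem_Msub (b c : Aˣ) :
    3 * ((b : A) + 1) * ((c : A) + 1) ∈ Msub A :=
  AddSubgroup.subset_closure (Or.inr ⟨b, c, rfl⟩)

-- In every abelian quotient of `St(2,A)`, `h₁₂(u) ≡ x₁₂(2u + u⁻¹ - 3)`, so `{v,u}` becomes
-- `x₁₂(symbolWeight u v)`.
def symbolWeight (u v : Aˣ) : A :=
  2 * u * v + ↑u⁻¹ * ↑v⁻¹ + 3 - 2 * u - ↑u⁻¹ - 2 * v - ↑v⁻¹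

lemma symbolWeight_eq (u v : Aˣ) :
    symbolWeight u v = 3 * (((-u : Aˣ) : A) + 1) * (((-v : Aˣ) : A) + 1)
      + -((u⁻¹ : Aˣ) : A) * (((v⁻¹ : Aˣ) : A) - 1) * ((u : A) ^ 2 - 1)
      + -((u : A) - 1) * ((v⁻¹ : Aˣ) : A) * ((v : A) ^ 2 - 1) := by
  have hu : ((u⁻¹ : Aˣ) : A) * u = 1 := u.inv_mul
  have hv : ((v⁻¹ : Aˣ) : A) * v = 1 := v.inv_mul
  simp only [symbolWeight, Units.val_neg]
  linear_combination (((v⁻¹ : Aˣ) : A) - 1) * u * hu + ((u : A) - 1) * v * hv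

lemma symbolWeight_mem_Msub (u v : Aˣ) : symbolWeight u v ∈ Msub A := by
  rw [symbolWeight_eq]
  exact add_mem (add_mem (three_mul_add_one_mul_add_one_mem_Msub _ _)
    (mul_sq_sub_one_mem_Msub _ u)) (mul_sq_sub_one_mem_Msub _ v)

namespace Steinberg2

variable (A) in
def stw21 (u : Aˣ) : St2 A := stx21 A (u : A) * stx12 A (-((u⁻¹ : Aˣ) : A)) * stx21 A (u : A)

lemma stx12_add (r s : A) : stx12 A (r + s) = stx12 A r * stx12 A s :=
  (PresentedGroup.mk_eq_mk_of_mul_inv_mem (Or.inl (Or.inl (Or.inl ⟨r, s, rfl⟩)))).symm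

lemma stw12_conj (u : Aˣ) (x : A) :
    stw12 A u * stx21 A x * (stw12 A u)⁻¹ = stx12 A (-(u : A) ^ 2 * x) :=
  PresentedGroup.mk_eq_mk_of_mul_inv_mem (Or.inl (Or.inr ⟨u, x, rfl⟩))

lemma stw21_conj (u : Aˣ) (x : A) :
    stw21 A u * stx12 A x * (stw21 A u)⁻¹ = stx21 A (-(u : A) ^ 2 * x) :=
  PresentedGroup.mk_eq_mk_of_mul_inv_mem (Or.inr ⟨u, x, rfl⟩)

variable (A) in
def stx12Hom : Multiplicative A →* St2 A where
  toFun x := stx12 A x.toAdd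
  map_one' := left_eq_mul.mp (by rw [← stx12_add, add_zero] : stx12 A 0 = stx12 A 0 * stx12 A 0)
  map_mul' x y := stx12_add x.toAdd y.toAdd

lemma stx12_neg (r : A) : stx12 A (-r) = (stx12 A r)⁻¹ :=
  map_inv (stx12Hom A) (Multiplicative.ofAdd r)

section CommGroup

variable {C : Type*} [CommGroup C] (f : St2 A →* C)

lemma map_stx21 (x : A) : f (stx21 A x) = f (stx12 A (-x)) := by
  have h := congrArg f (stw12_conj 1 x)
  rwa [map_mul, map_mul, map_inv, mul_inv_cancel_comm, Units.val_one, one_pow, neg_one_mul] at h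

lemma map_stx12_sq_mul (a : Aˣ) (x : A) : f (stx12 A ((a : A) ^ 2 * x)) = f (stx12 A x) := by
  have h := congrArg f (stw21_conj a x)
  rwa [map_mul, map_mul, map_inv, mul_inv_cancel_comm, map_stx21, neg_mul, neg_neg, eq_comm] at h

lemma map_stw12 (u : Aˣ) : f (stw12 A u) = f (stx12 A (2 * u + ↑u⁻¹)) := by
  rw [show 2 * (u : A) + ↑u⁻¹ = u + ↑u⁻¹ + u by ring, stx12_add, stx12_add, stw12, map_mul,
    map_mul, map_mul, map_mul, map_stx21, neg_neg]

lemma map_sth12 (u : Aˣ) : f (sth12 A u) = f (stx12 A (2 * u + ↑u⁻¹ - 3)) := by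
  rw [sth12, map_mul, map_stw12, map_stw12, ← map_mul, ← stx12_add]
  congr 2
  simp only [Units.val_neg, Units.val_one, inv_neg, inv_one]
  ring

lemma map_stSymbol (u v : Aˣ) : f (stSymbol A v u) = f (stx12 A (symbolWeight u v)) := by
  rw [stSymbol, map_mul, map_mul, map_inv, map_inv, map_sth12, map_sth12, map_sth12, ← map_inv,
    ← map_inv, ← stx12_neg, ← stx12_neg, ← map_mul, ← map_mul, ← stx12_add, ← stx12_add]
  congr 2
  simp only [symbolWeight, Units.val_mul, mul_inv]
  ring

lemma map_stx12_mul_sq_sub_one (x : A) (a : Aˣ) : f (stx12 A (x * ((a : A) ^ 2 - 1))) = 1 := by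
  rw [show x * ((a : A) ^ 2 - 1) = a ^ 2 * x + -x by ring, stx12_add, stx12_neg, map_mul, map_inv,
    map_stx12_sq_mul, mul_inv_cancel]

lemma Msub_le_ker (hf : ∀ u v : Aˣ, f (stSymbol A v u) = 1) :
    Msub A ≤ (f.comp (stx12Hom A)).toAdditiveRight.ker := by
  have mem_ker {x : A} (hx : f (stx12 A x) = 1) : x ∈ (f.comp (stx12Hom A)).toAdditiveRight.ker :=
    AddMonoidHom.mem_ker.2 (congrArg Additive.ofMul hx)
  refine AddSubgroup.closure_le _ |>.2 ?_
  rintro _ (⟨x, a, rfl⟩ | ⟨b, c, rfl⟩)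
  · exact mem_ker (map_stx12_mul_sq_sub_one f x a)
  · have h := symbolWeight_eq (-b) (-c)
    rw [neg_neg, neg_neg, ← sub_eq_iff_eq_add, ← sub_eq_iff_eq_add] at h
    rw [← h]
    refine sub_mem (sub_mem (mem_ker ?_) (mem_ker (map_stx12_mul_sq_sub_one f _ _)))
      (mem_ker (map_stx12_mul_sq_sub_one f _ _))
    rw [← map_stSymbol, hf]

end CommGroup

variable (A) in
def quotientMsubGen : A ⊕ A → Multiplicative (A ⧸ Msub A) :=
  Sum.elim (fun x => .ofAdd (x : A ⧸ Msub A)) (fun x => .ofAdd ((-x : A) : A ⧸ Msub A))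

lemma lift_quotientMsubGen_eq_one : ∀ r ∈ StRels A, FreeGroup.lift (quotientMsubGen A) r = 1 := by
  rintro r (((⟨x, y, rfl⟩ | ⟨x, y, rfl⟩) | ⟨u, x, rfl⟩) | ⟨u, x, rfl⟩) <;>
    simp only [fw12, fw21, map_mul, map_inv, FreeGroup.lift_apply_of, quotientMsubGen,
      Sum.elim_inl, Sum.elim_inr, ← ofAdd_add, ← ofAdd_neg, ofAdd_eq_one,
      ← QuotientAddGroup.mk_add, ← QuotientAddGroup.mk_neg, QuotientAddGroup.eq_zero_iff]
  · convert zero_mem (Msub A) using 1; ring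
  · convert zero_mem (Msub A) using 1; ring
  · convert mul_sq_sub_one_mem_Msub x u using 1; ring
  · convert mul_sq_sub_one_mem_Msub (-x) u using 1; ring

variable (A) in
def toQuotientMsub : St2 A →* Multiplicative (A ⧸ Msub A) :=
  PresentedGroup.toGroup lift_quotientMsubGen_eq_one

lemma toQuotientMsub_stx12 (r : A) : toQuotientMsub A (stx12 A r) = .ofAdd (r : A ⧸ Msub A) :=
  PresentedGroup.toGroup.of lift_quotientMsubGen_eq_one

lemma toQuotientMsub_stx21 (r : A) :
    toQuotientMsub A (stx21 A r) = .ofAdd ((-r : A) : A ⧸ Msub A) :=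
  PresentedGroup.toGroup.of lift_quotientMsubGen_eq_one

lemma toQuotientMsub_stSymbol (u v : Aˣ) : toQuotientMsub A (stSymbol A v u) = 1 := by
  rw [map_stSymbol, toQuotientMsub_stx12, ofAdd_eq_one, QuotientAddGroup.eq_zero_iff]
  exact symbolWeight_mem_Msub u v

lemma surjective_of_map_stx {π : St2 A →* EE2 A}
    (hπ12 : ∀ r : A, π (stx12 A r) = ⟨E12 A r, E12_mem r⟩)
    (hπ21 : ∀ r : A, π (stx21 A r) = ⟨E21 A r, E21_mem r⟩) :
    Function.Surjective π := by
  rw [← MonoidHom.range_eq_top, eq_top_iff]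
  refine (Subgroup.closure_closure_coe_preimage
    (k := Set.range (E12 A) ∪ Set.range (E21 A))).ge.trans ((Subgroup.closure_le _).2 ?_)
  rintro ⟨g, hg⟩ (⟨r, rfl⟩ | ⟨r, rfl⟩)
  · exact ⟨stx12 A r, hπ12 r⟩
  · exact ⟨stx21 A r, hπ21 r⟩

section CommGroup

variable {C : Type*} [CommGroup C] (f : St2 A →* C) (hf : ∀ u v : Aˣ, f (stSymbol A v u) = 1)

def liftQuotientMsub : A ⧸ Msub A →+ Additive C :=
  QuotientAddGroup.lift _ _ (Msub_le_ker f hf)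

lemma liftQuotientMsub_comp_toQuotientMsub :
    (liftQuotientMsub f hf).toMultiplicativeLeft.comp (toQuotientMsub A) = f := by
  refine PresentedGroup.ext fun r => ?_
  rcases r with r | r
  · change (liftQuotientMsub f hf (toQuotientMsub A (stx12 A r)).toAdd).toMul = f (stx12 A r)
    rw [toQuotientMsub_stx12]
    rfl
  · change (liftQuotientMsub f hf (toQuotientMsub A (stx21 A r)).toAdd).toMul = f (stx21 A r)
    rw [toQuotientMsub_stx21, map_stx21]
    rfl

end CommGroup

lemma ker_le_ker_toQuotientMsub {G : Type*} [Group G] {π : St2 A →* G}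
    (huniv : π.ker = Subgroup.closure {s : St2 A | ∃ u v : Aˣ, s = stSymbol A v u}) :
    π.ker ≤ (toQuotientMsub A).ker :=
  huniv ▸ (Subgroup.closure_le _).2 fun _ ⟨u, v, hs⟩ => hs ▸ toQuotientMsub_stSymbol u v

end Steinberg2

open Steinberg2 in
/-- If `A` is universal for `GE₂`, i.e. the kernel `K₂(2,A)` of the
canonical homomorphism `St(2,A) → E₂(A)` is generated by the Steinberg symbols, then
`x ↦ [E₁₂(x)]` induces an isomorphism `A/M ≅ E₂(A)ᵃᵇ ≅ H₁(E₂(A), ℤ)`. -/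
theorem h1_E2_of_universal_GE2
    (A : Type*) [CommRing A]
    (π : St2 A →* ↥(EE2 A))
    (hπ12 : ∀ r : A, π (stx12 A r) = (⟨E12 A r, E12_mem r⟩ : ↥(EE2 A)))
    (hπ21 : ∀ r : A, π (stx21 A r) = (⟨E21 A r, E21_mem r⟩ : ↥(EE2 A)))
    (huniv : π.ker = Subgroup.closure {s : St2 A | ∃ u v : Aˣ, s = stSymbol A v u}) :
    ∃ ψ : (A ⧸ Msub A) ≃+ Additive (Abelianization ↥(EE2 A)),
      ∀ x : A, ψ (QuotientAddGroup.mk x) =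
        Additive.ofMul (Abelianization.of (⟨E12 A x, E12_mem x⟩ : ↥(EE2 A))) := by
  have hsurj := surjective_of_map_stx hπ12 hπ21
  have hsym (u v : Aˣ) : π (stSymbol A v u) = 1 :=
    MonoidHom.mem_ker.1 (huniv ▸ Subgroup.subset_closure ⟨u, v, rfl⟩)
  let f := Abelianization.of.comp π
  have hf (u v : Aˣ) : f (stSymbol A v u) = 1 := by simp [f, hsym]
  let ψ : Abelianization (EE2 A) →* Multiplicative (A ⧸ Msub A) :=
    Abelianization.lift <|
      π.liftOfSurjective hsurj ⟨toQuotientMsub A, ker_le_ker_toQuotientMsub huniv⟩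
  have hψ (s : St2 A) : ψ (f s) = toQuotientMsub A s := by simp [ψ, f]
  refine ⟨(liftQuotientMsub f hf).toAddEquiv ψ.toAdditiveLeft ?_ ?_, fun x => ?_⟩
  · ext x
    change (ψ (f (stx12 A x))).toAdd = x
    rw [hψ, toQuotientMsub_stx12]
    rfl
  · ext z
    obtain ⟨s, rfl⟩ := hsurj z
    change (liftQuotientMsub f hf (ψ (f s)).toAdd).toMul = f s
    rw [hψ]
    exact DFunLike.congr_fun (liftQuotientMsub_comp_toQuotientMsub f hf) s
  · change Additive.ofMul (f (stx12 A x)) = _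
    simp [f, hπ12]
end

section
/- For any commutative ring A, the assignment a + M ↦ class of (⟨1⟩, ā) defines a group isomorphism from A/M onto the quotient of G_A × A_{A^×} by the subgroup generated by the pairs (⟨b⟩, class of 3(b−1)), b ∈ A^×; its inverse is induced by (⟨b⟩, ā) ↦ class of a − 3b + 3 in A/M. -/
variable (A : Type*) [CommRing A]

/-- `G_A := A^×/(A^×)²`. -/
def GA : Type _ := Aˣ ⧸ (powMonoidHom 2 : Aˣ →* Aˣ).range

instance : CommGroup (GA A) := by unfold GA; infer_instance

/-- The class `⟨a⟩ ∈ G_A` of a unit `a`. -/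
def cls (a : Aˣ) : GA A := QuotientGroup.mk a

/-- The additive subgroup of `A` generated by the elements `x(a²−1)`, `x ∈ A`, `a ∈ A^×`. -/
def Asub : AddSubgroup A :=
  AddSubgroup.closure {z : A | ∃ (x : A) (a : Aˣ), z = x * ((a : A) ^ 2 - 1)}

/-- `A_{A^×} := A/⟨x(a²−1)⟩`. -/
def AmodUnits : Type _ := A ⧸ Asub A

instance : AddCommGroup (AmodUnits A) := by unfold AmodUnits; infer_instance

/-- The subgroup of `G_A × A_{A^×}` generated by the pairs `(⟨b⟩, 3(b−1))`, `b ∈ A^×`. -/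
def relSub : AddSubgroup (Additive (GA A) × AmodUnits A) :=
  AddSubgroup.closure
    {p | ∃ b : Aˣ, p = (Additive.ofMul (cls A b),
      (QuotientAddGroup.mk (3 * ((b : A) - 1)) : A ⧸ Asub A))}

/- In the quotient by the relations `(⟨b⟩, 3(b−1)) = 0` the class of `(0, 3(b−1))` is `−⟨b⟩`, so
`b ↦ 3(b−1)` becomes additive there and `3(b−1)(c−1) = 3(bc−1) − 3(b−1) − 3(c−1)` dies; after
`b, c ↦ −b, −c` these are the extra generators `3(b+1)(c+1)` of `M`. Conversely, modulo `M` the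
map `b ↦ 3 − 3b` is a homomorphism `A^× → A/M` killing squares, so it factors through `G_A` and
removes the `G_A` coordinate. -/

abbrev RelQuot : Type _ := (Additive (GA A) × AmodUnits A) ⧸ relSub A

lemma Asub_le_Msub : Asub A ≤ Msub A :=
  AddSubgroup.closure_mono Set.subset_union_left

-- Typed with codomain `AmodUnits A`, so that rewriting does not meet the instances of `A ⧸ Asub A`.
def toAmodUnits : A →+ AmodUnits A := QuotientAddGroup.mk' (Asub A)

def RelQuot.ofA : A →+ RelQuot A :=
  (QuotientAddGroup.mk' (relSub A)).comp ((AddMonoidHom.inr _ _).comp (toAmodUnits A))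

def RelQuot.ofGA : Additive (GA A) →+ RelQuot A :=
  (QuotientAddGroup.mk' (relSub A)).comp (AddMonoidHom.inl _ _)

section

variable {A}

lemma mul_sq_sub_one_mem_Asub (x : A) (a : Aˣ) : x * ((a : A) ^ 2 - 1) ∈ Asub A :=
  AddSubgroup.subset_closure ⟨x, a, rfl⟩

lemma three_mul_sub_one_mul_sub_one_mem_Msub (b c : Aˣ) :
    3 * ((b : A) - 1) * ((c : A) - 1) ∈ Msub A := by
  have h : 3 * (((-b : Aˣ) : A) + 1) * (((-c : Aˣ) : A) + 1) ∈ Msub A :=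
    AddSubgroup.subset_closure (Or.inr ⟨-b, -c, rfl⟩)
  convert h using 1
  push_cast
  ring

namespace RelQuot

lemma mk_eq_ofGA_add_ofA (b : Aˣ) (a : A) :
    (QuotientAddGroup.mk (Additive.ofMul (cls A b), (QuotientAddGroup.mk a : A ⧸ Asub A)) :
      RelQuot A) = ofGA A (Additive.ofMul (cls A b)) + ofA A a := by
  change _ = QuotientAddGroup.mk _ + QuotientAddGroup.mk _
  rw [← QuotientAddGroup.mk_add]
  exact congrArg _ (Prod.ext (add_zero _).symm (zero_add _).symm)

lemma ofA_three_mul_sub_one (b : Aˣ) :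
    ofA A (3 * ((b : A) - 1)) = -ofGA A (Additive.ofMul (cls A b)) := by
  have h : (QuotientAddGroup.mk (Additive.ofMul (cls A b),
      (QuotientAddGroup.mk (3 * ((b : A) - 1)) : A ⧸ Asub A)) : RelQuot A) = 0 :=
    (QuotientAddGroup.eq_zero_iff _).mpr (AddSubgroup.subset_closure ⟨b, rfl⟩)
  rw [mk_eq_ofGA_add_ofA] at h
  exact eq_neg_of_add_eq_zero_right h

lemma ofA_three_mul_sub_one_mul_sub_one (b c : Aˣ) :
    ofA A (3 * ((b : A) - 1) * ((c : A) - 1)) = 0 := by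
  have h : 3 * ((b : A) - 1) * ((c : A) - 1) =
      3 * (((b * c : Aˣ) : A) - 1) - 3 * ((b : A) - 1) - 3 * ((c : A) - 1) := by
    push_cast
    ring
  have hcls : Additive.ofMul (cls A (b * c)) =
      Additive.ofMul (cls A b) + Additive.ofMul (cls A c) := rfl
  rw [h, map_sub, map_sub, ofA_three_mul_sub_one, ofA_three_mul_sub_one, ofA_three_mul_sub_one,
    hcls, map_add]
  abel

lemma Msub_le_ker_ofA : Msub A ≤ (ofA A).ker := by
  rw [Msub, AddSubgroup.closure_le]
  rintro _ (⟨x, a, rfl⟩ | ⟨b, c, rfl⟩)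
  · have h : toAmodUnits A (x * ((a : A) ^ 2 - 1)) = 0 :=
      (QuotientAddGroup.eq_zero_iff _).mpr (mul_sq_sub_one_mem_Asub x a)
    rw [SetLike.mem_coe, AddMonoidHom.mem_ker, ofA, AddMonoidHom.comp_apply,
      AddMonoidHom.comp_apply, h, map_zero, map_zero]
  · have h := ofA_three_mul_sub_one_mul_sub_one (A := A) (-b) (-c)
    push_cast at h
    rw [SetLike.mem_coe, AddMonoidHom.mem_ker, ← h]
    congr 1
    ring

end RelQuot

lemma mk_three_sub_three_mul_mul (b c : Aˣ) :
    (QuotientAddGroup.mk (3 - 3 * ((b * c : Aˣ) : A)) : A ⧸ Msub A) =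
      QuotientAddGroup.mk (3 - 3 * (b : A)) + QuotientAddGroup.mk (3 - 3 * (c : A)) := by
  rw [← QuotientAddGroup.mk_add, QuotientAddGroup.eq]
  convert three_mul_sub_one_mul_sub_one_mem_Msub b c using 1
  push_cast
  ring

lemma mk_three_sub_three_mul_sq (u : Aˣ) :
    (QuotientAddGroup.mk (3 - 3 * ((u ^ 2 : Aˣ) : A)) : A ⧸ Msub A) = 0 := by
  refine (QuotientAddGroup.eq_zero_iff _).mpr (Asub_le_Msub A ?_)
  convert mul_sq_sub_one_mem_Asub (-3) u using 1
  push_cast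
  ring

end

def unitsToAmodM : Aˣ →* Multiplicative (A ⧸ Msub A) where
  toFun b := Multiplicative.ofAdd (QuotientAddGroup.mk (3 - 3 * (b : A)))
  map_one' := by simp
  map_mul' b c := congrArg Multiplicative.ofAdd (mk_three_sub_three_mul_mul b c)

def GAToAmodM : Additive (GA A) →+ A ⧸ Msub A :=
  MonoidHom.toAdditiveLeft <| QuotientGroup.lift _ (unitsToAmodM A) <| by
    rintro _ ⟨u, rfl⟩
    exact congrArg Multiplicative.ofAdd (mk_three_sub_three_mul_sq u)

def prodToAmodM : Additive (GA A) × AmodUnits A →+ A ⧸ Msub A :=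
  (GAToAmodM A).coprod (QuotientAddGroup.map _ _ (AddMonoidHom.id A) (Asub_le_Msub A))

section

variable {A}

lemma prodToAmodM_mk (b : Aˣ) (a : A) :
    prodToAmodM A (Additive.ofMul (cls A b), (QuotientAddGroup.mk a : A ⧸ Asub A)) =
      QuotientAddGroup.mk (a - 3 * (b : A) + 3) :=
  (QuotientAddGroup.mk_add (Msub A) (3 - 3 * (b : A)) a).symm.trans (congrArg _ (by ring))

lemma relSub_le_ker_prodToAmodM : relSub A ≤ (prodToAmodM A).ker := by
  rw [relSub, AddSubgroup.closure_le]
  rintro _ ⟨b, rfl⟩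
  refine AddMonoidHom.mem_ker.mpr ((prodToAmodM_mk b _).trans ?_)
  rw [show 3 * ((b : A) - 1) - 3 * b + 3 = 0 by ring, QuotientAddGroup.mk_zero]

end

def AmodMToRelQuot : A ⧸ Msub A →+ RelQuot A :=
  QuotientAddGroup.lift _ (RelQuot.ofA A) RelQuot.Msub_le_ker_ofA

def RelQuot.toAmodM : RelQuot A →+ A ⧸ Msub A :=
  QuotientAddGroup.lift _ (prodToAmodM A) relSub_le_ker_prodToAmodM

section

variable {A}

lemma RelQuot.toAmodM_mk (b : Aˣ) (a : A) :
    RelQuot.toAmodM A (QuotientAddGroup.mk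
      (Additive.ofMul (cls A b), (QuotientAddGroup.mk a : A ⧸ Asub A))) =
      QuotientAddGroup.mk (a - 3 * (b : A) + 3) :=
  prodToAmodM_mk b a

lemma RelQuot.toAmodM_comp_AmodMToRelQuot :
    (RelQuot.toAmodM A).comp (AmodMToRelQuot A) = AddMonoidHom.id _ := by
  refine QuotientAddGroup.addMonoidHom_ext _ (AddMonoidHom.ext fun a => ?_)
  refine (RelQuot.toAmodM_mk 1 a).trans (congrArg _ ?_)
  push_cast
  ring

lemma AmodMToRelQuot_comp_RelQuot_toAmodM :
    (AmodMToRelQuot A).comp (RelQuot.toAmodM A) = AddMonoidHom.id _ := by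
  refine QuotientAddGroup.addMonoidHom_ext _ (AddMonoidHom.ext fun ⟨x, y⟩ => ?_)
  obtain ⟨b, rfl⟩ := QuotientGroup.mk_surjective (Additive.toMul x)
  obtain ⟨a, rfl⟩ := QuotientAddGroup.mk_surjective y
  have h : RelQuot.ofA A (a - 3 * (b : A) + 3) =
      RelQuot.ofGA A (Additive.ofMul (cls A b)) + RelQuot.ofA A a := by
    rw [show a - 3 * (b : A) + 3 = a - 3 * ((b : A) - 1) by ring, map_sub,
      RelQuot.ofA_three_mul_sub_one]
    abel
  exact (congrArg (AmodMToRelQuot A) (RelQuot.toAmodM_mk b a)).trans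
    (h.trans (RelQuot.mk_eq_ofGA_add_ofA b a).symm)

end

def AmodMEquivRelQuot : A ⧸ Msub A ≃+ RelQuot A :=
  AddMonoidHom.toAddEquiv _ _ RelQuot.toAmodM_comp_AmodMToRelQuot
    AmodMToRelQuot_comp_RelQuot_toAmodM

/-- `a + M ↦ (⟨1⟩, ā)` defines an isomorphism from `A/M` onto
`(G_A × A_{A^×})/⟨(⟨b⟩, 3(b−1))⟩`, with inverse induced by `(⟨b⟩, ā) ↦ a − 3b + 3`. -/
theorem amodM_iso_GA_times_AmodUnits :
    ∃ e : (A ⧸ Msub A) ≃+ (Additive (GA A) × AmodUnits A) ⧸ relSub A,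
      (∀ a : A, e (QuotientAddGroup.mk a) =
        QuotientAddGroup.mk (Additive.ofMul (cls A 1),
          (QuotientAddGroup.mk a : A ⧸ Asub A))) ∧
      (∀ (b : Aˣ) (a : A), e.symm (QuotientAddGroup.mk (Additive.ofMul (cls A b),
          (QuotientAddGroup.mk a : A ⧸ Asub A))) =
        QuotientAddGroup.mk (a - 3 * (b : A) + 3)) :=
  ⟨AmodMEquivRelQuot A, fun _ => rfl, RelQuot.toAmodM_mk⟩
end

section
/- Let A be a local ring with maximal ideal m_A such that the residue field A/m_A has exactly 3 elements. Then H₁(E₂(A),ℤ) ≅ E₂(A)^ab is isomorphic to the additive group A/m_A. -/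
open Matrix

variable (A : Type*) [CommRing A]

variable {A}

variable (A)

/-!
Conjugating by `diag(u, u⁻¹) ∈ E₂(A)` turns `E₁₂(v)` into `E₁₂(u²v)`, so `E₁₂((u² - 1)v)` dies in
the abelianization; when `2` is a unit, every `a ∈ m_A` has this form with `u = 1 + a` and
`v = (2 + a)⁻¹`. The Weyl element conjugates `E₁₂(-b)` into `E₂₁(b)`, hence `a ↦ [E₁₂(a)]` maps
`A/m_A` onto `E₂(A)ᵃᵇ`. Reducing to `SL₂(𝔽₃)` and applying its abelian character
`SL₂(𝔽₃) → SL₂(𝔽₃)/Q₈ ≅ 𝔽₃` sends `[E₁₂(a)]` back to the residue of `a`, which gives injectivity.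
-/

open IsLocalRing
open scoped MatrixGroups

theorem Abelianization.of_eq_of_semiconjBy {G : Type*} [Group G] {g x y : G}
    (h : SemiconjBy g x y) : of x = of y :=
  mul_left_cancel (by rw [← map_mul, h, map_mul, mul_comm])

lemma IsLocalRing.isUnit_add_of_mem_maximalIdeal {R : Type*} [CommRing R] [IsLocalRing R]
    {u a : R} (hu : IsUnit u) (ha : a ∈ maximalIdeal R) : IsUnit (u + a) :=
  (isUnit_or_isUnit_of_isUnit_add (b := -a) (by simpa using hu)).resolve_right
    ((mem_maximalIdeal _).1 (neg_mem ha))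

/-- The abelian character of `SL₂(𝔽₃) ≅ Q₈ ⋊ C₃`: the polynomial vanishes exactly on
`Q₈ = {M | tr M = 0} ∪ {±1}` and takes the value `1` on `[[1,1],[0,1]]`. -/
def charSL2ZMod3 : SL(2, ZMod 3) →* Multiplicative (ZMod 3) where
  toFun M := .ofAdd ((M 0 0 + M 1 1) * (M 1 0 - M 0 0 * M 0 1 * M 1 1))
  map_one' := rfl
  map_mul' M N := by
    have key : ∀ a b c d e f g h : ZMod 3, a * d - b * c = 1 → e * h - f * g = 1 →
        (a * e + b * g + (c * f + d * h)) *
          (c * e + d * g - (a * e + b * g) * (a * f + b * h) * (c * f + d * h)) =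
        (a + d) * (c - a * b * d) + (e + h) * (g - e * f * h) := by
      decide
    have hM := M.det_coe
    have hN := N.det_coe
    rw [det_fin_two] at hM hN
    simpa [Matrix.mul_apply, Fin.sum_univ_two, ← ofAdd_add] using key _ _ _ _ _ _ _ _ hM hN

variable {A}

lemma E12_add (a b : A) : E12 A (a + b) = E12 A a * E12 A b := by
  ext : 1
  simp [E12, add_comm]

lemma E12_zero : E12 A 0 = 1 := by
  ext : 1
  simp [E12, Matrix.one_fin_two]

namespace EE2

variable (A) in
def e12 : Multiplicative A →* EE2 A where
  toFun a := ⟨E12 A a.toAdd, E12_mem _⟩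
  map_one' := Subtype.ext E12_zero
  map_mul' a b := Subtype.ext (E12_add a.toAdd b.toAdd)

def e21 (a : A) : EE2 A := ⟨E21 A a, E21_mem a⟩

def weyl : EE2 A := e12 A (.ofAdd 1) * e21 (-1) * e12 A (.ofAdd 1)

lemma weyl_semiconjBy (b : A) : SemiconjBy weyl (e12 A (.ofAdd (-b))) (e21 b) := by
  ext : 2
  simp [weyl, e12, e21, E12, E21]

def diag (u : Aˣ) : EE2 A :=
  e12 A (.ofAdd u) * e21 (-(↑u⁻¹ : A)) * e12 A (.ofAdd u) *
    (e12 A (.ofAdd (-1)) * e21 1 * e12 A (.ofAdd (-1)))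

lemma coe_diag (u : Aˣ) :
    ((diag u : GL (Fin 2) A) : Matrix (Fin 2) (Fin 2) A) = !![(u : A), 0; 0, ↑u⁻¹] := by
  simp [diag, e12, e21, E12, E21]

lemma diag_semiconjBy (u : Aˣ) (v : A) :
    SemiconjBy (diag u) (e12 A (.ofAdd v)) (e12 A (.ofAdd (u * u * v))) := by
  ext : 2
  simp [coe_diag, e12, E12]
  linear_combination (-(u : A) * v) * u.mul_inv

variable (A) in
def ofE12 : Multiplicative A →* Abelianization (EE2 A) := Abelianization.of.comp (e12 A)

lemma ofE12_surjective : Function.Surjective (ofE12 A) := by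
  rw [← MonoidHom.range_eq_top, eq_top_iff]
  rintro x -
  obtain ⟨⟨g, hg⟩, rfl⟩ := QuotientGroup.mk_surjective x
  induction hg using Subgroup.closure_induction with
  | mem g hg =>
    rcases hg with ⟨a, rfl⟩ | ⟨b, rfl⟩
    · exact ⟨.ofAdd a, rfl⟩
    · exact ⟨.ofAdd (-b), Abelianization.of_eq_of_semiconjBy (weyl_semiconjBy b)⟩
  | one => exact one_mem _
  | mul g h _ _ hg hh => exact mul_mem hg hh
  | inv g _ hg => exact inv_mem hg

lemma ofE12_mul_self_sub_one_mul (u : Aˣ) (v : A) :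
    ofE12 A (.ofAdd ((u * u - 1) * v)) = 1 := by
  rw [sub_one_mul, ofAdd_sub, map_div, div_eq_one]
  exact (Abelianization.of_eq_of_semiconjBy (diag_semiconjBy u v)).symm

lemma ofE12_eq_one_of_mem_maximalIdeal [IsLocalRing A] (h2 : IsUnit (2 : A)) {a : A}
    (ha : a ∈ maximalIdeal A) : ofE12 A (.ofAdd a) = 1 := by
  obtain ⟨u, hu⟩ := isUnit_add_of_mem_maximalIdeal isUnit_one ha
  obtain ⟨w, hw⟩ := isUnit_add_of_mem_maximalIdeal h2 ha
  have ha' : a = (u * u - 1) * ↑w⁻¹ := by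
    rw [hu]
    linear_combination (-a) * w.mul_inv + (a * ↑w⁻¹) * hw
  rw [ha']
  exact ofE12_mul_self_sub_one_mul u _

lemma le_ker_det : EE2 A ≤ (GeneralLinearGroup.det).ker :=
  (Subgroup.closure_le _).2 <| by
    rintro _ (⟨a, rfl⟩ | ⟨a, rfl⟩) <;> ext <;> simp [E12, E21]

variable (A) in
def toSL : EE2 A →* SL(2, A) where
  toFun g := ⟨(g : GL (Fin 2) A), by simpa [Units.ext_iff] using le_ker_det g.2⟩
  map_one' := rfl
  map_mul' _ _ := rfl

def abelianizationToZMod3 (r : A →+* ZMod 3) :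
    Abelianization (EE2 A) →* Multiplicative (ZMod 3) :=
  Abelianization.lift (charSL2ZMod3.comp ((SpecialLinearGroup.map r).comp (toSL A)))

lemma abelianizationToZMod3_ofE12 (r : A →+* ZMod 3) (a : A) :
    abelianizationToZMod3 r (ofE12 A (.ofAdd a)) = .ofAdd (r a) := by
  change Multiplicative.ofAdd ((r 1 + r 1) * (r 0 - r 1 * r a * r 1)) = _
  rw [map_one, map_zero]
  have h3 : (3 : ZMod 3) = 0 := rfl
  congr 1
  linear_combination (-r a) * h3

theorem abelianizationToZMod3_bijective [IsLocalRing A] (r : A →+* ZMod 3) :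
    Function.Bijective (abelianizationToZMod3 r) := by
  have hr : Function.Surjective r := ZMod.ringHom_surjective r
  have hker : RingHom.ker r = maximalIdeal A :=
    eq_maximalIdeal (RingHom.ker_isMaximal_of_surjective r hr)
  have h2 : IsUnit (2 : A) := by
    rw [← notMem_maximalIdeal, ← hker, RingHom.mem_ker, map_ofNat]
    decide
  constructor
  · rw [injective_iff_map_eq_one]
    intro x hx
    obtain ⟨a, rfl⟩ := ofE12_surjective x
    rw [← ofAdd_toAdd a, abelianizationToZMod3_ofE12, ofAdd_eq_one, ← RingHom.mem_ker,
      hker] at hx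
    rw [← ofAdd_toAdd a]
    exact ofE12_eq_one_of_mem_maximalIdeal h2 hx
  · intro y
    obtain ⟨a, ha⟩ := hr y.toAdd
    exact ⟨ofE12 A (.ofAdd a), by rw [abelianizationToZMod3_ofE12, ha, ofAdd_toAdd]⟩

end EE2

/-- If `A` is a local ring whose residue field has exactly three elements,
then `H₁(E₂(A), ℤ) ≅ E₂(A)ᵃᵇ` is isomorphic to the additive group `A/m_A`. -/
theorem h1_E2_of_local_residue_card_three
    (A : Type*) [CommRing A] [IsLocalRing A]
    (h : Nat.card (IsLocalRing.ResidueField A) = 3) :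
    Nonempty (Additive (Abelianization ↥(EE2 A)) ≃+
      (A ⧸ (IsLocalRing.maximalIdeal A))) := by
  have : Fintype (ResidueField A) := @Fintype.ofFinite _ (Nat.finite_of_card_ne_zero (by omega))
  let σ : ZMod 3 ≃+* ResidueField A :=
    ZMod.ringEquivOfPrime _ Nat.prime_three (by rwa [← Nat.card_eq_fintype_card])
  let r : A →+* ZMod 3 := σ.symm.toRingHom.comp (residue A)
  exact ⟨(MulEquiv.toAdditiveLeft
    (.ofBijective _ (EE2.abelianizationToZMod3_bijective r))).trans σ.toAddEquiv⟩
end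

section
/- Let A be a semilocal commutative ring such that for every maximal ideal m of A the residue field A/m has more than three elements. Then H₁(E₂(A),ℤ) = 0, i.e. the group E₂(A) is perfect. -/
/-!
For a unit `u`, the matrix `D(u) = diag(u, u⁻¹)` lies in `E₂(A)`, and
`⁅D(u), E₁₂(b)⁆ = E₁₂((u² - 1) b)`, `⁅D(u⁻¹), E₂₁(b)⁆ = E₂₁((u² - 1) b)`.
So if `u² - 1` is also a unit, every generator of `E₂(A)` is a commutator of elements of
`E₂(A)`. In a semilocal ring such a `u` exists by the Chinese remainder theorem: each residue
field has more than three elements, hence contains some `c ∉ {0, 1, -1}`.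
-/

open Matrix

variable (A : Type*) [CommRing A]

variable {A}

section Perfect

variable {G : Type*} [Group G]

lemma Abelianization.subsingleton_of_isPerfect [Group.IsPerfect G] :
    Subsingleton (Abelianization G) := by
  unfold Abelianization
  rw [Group.IsPerfect.commutator_eq_top]
  exact QuotientGroup.subsingleton_quotient_top

lemma Subgroup.isPerfect_closure_of_subset_commutator {S : Set G}
    (hS : S ⊆ (⁅closure S, closure S⁆ : Subgroup G)) : Group.IsPerfect (closure S) :=
  isPerfect_iff.mpr <| le_antisymm ((commutator_le_sup _ _).trans_eq (sup_idem _))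
    (closure_le _ |>.mpr hS)

end Perfect

lemma isUnit_of_forall_mk_ne_zero {x : A}
    (hx : ∀ I : Ideal A, I.IsMaximal → Ideal.Quotient.mk I x ≠ 0) : IsUnit x := by
  by_contra h
  obtain ⟨I, hI, hxI⟩ := exists_max_ideal_of_mem_nonunits (mem_nonunits_iff.mpr h)
  exact hx I hI (Ideal.Quotient.eq_zero_iff_mem.mpr hxI)

lemma exists_mk_eq_of_finite_maximal (hsemi : {I : Ideal A | I.IsMaximal}.Finite)
    (c : ∀ I : {I : Ideal A // I.IsMaximal}, A ⧸ I.1) :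
    ∃ x : A, ∀ I, Ideal.Quotient.mk I.1 x = c I := by
  have : Finite {I : Ideal A // I.IsMaximal} := hsemi.to_subtype
  exact Ideal.pi_quotient_surjective (fun I J hIJ ↦ Ideal.isCoprime_iff_sup_eq.mpr
    (I.2.coprime_of_ne J.2 (Subtype.coe_ne_coe.mpr hIJ))) c

lemma exists_ne_zero_sq_ne_one_of_three_lt_mk {K : Type*} [Ring K] [NoZeroDivisors K]
    (hK : 3 < Cardinal.mk K) : ∃ c : K, c ≠ 0 ∧ c ^ 2 ≠ 1 := by
  by_contra! h
  have hsurj : Function.Surjective ![(0 : K), 1, -1] := by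
    intro c
    by_cases hc : c = 0
    · exact ⟨0, hc.symm⟩
    rcases sq_eq_one_iff.mp (h c hc) with hc1 | hc1
    exacts [⟨1, hc1.symm⟩, ⟨2, hc1.symm⟩]
  exact hK.not_ge (by simpa using Cardinal.lift_mk_le_lift_mk_of_surjective hsurj)

lemma exists_unit_isUnit_sq_sub_one (hsemi : {I : Ideal A | I.IsMaximal}.Finite)
    (hres : ∀ I : Ideal A, I.IsMaximal → 3 < Cardinal.mk (A ⧸ I)) :
    ∃ u : Aˣ, IsUnit ((u : A) ^ 2 - 1) := by
  have hc : ∀ I : {I : Ideal A // I.IsMaximal}, ∃ c : A ⧸ I.1, c ≠ 0 ∧ c ^ 2 ≠ 1 := fun I ↦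
    have := I.2.isPrime
    exists_ne_zero_sq_ne_one_of_three_lt_mk (hres I.1 I.2)
  choose c hc0 hc1 using hc
  obtain ⟨x, hx⟩ := exists_mk_eq_of_finite_maximal hsemi c
  have hxu : IsUnit x := isUnit_of_forall_mk_ne_zero fun I hI ↦ by
    simpa [hx ⟨I, hI⟩] using hc0 ⟨I, hI⟩
  refine ⟨hxu.unit, isUnit_of_forall_mk_ne_zero fun I hI ↦ ?_⟩
  simpa [hx ⟨I, hI⟩, sub_eq_zero] using hc1 ⟨I, hI⟩

open scoped commutatorElement

variable (A) in
def diagUnit (u : Aˣ) : GL (Fin 2) A :=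
  ⟨!![(u : A), 0; 0, (↑u⁻¹ : A)], !![(↑u⁻¹ : A), 0; 0, (u : A)],
    by rw [Matrix.mul_fin_two, Matrix.one_fin_two]; simp,
    by rw [Matrix.mul_fin_two, Matrix.one_fin_two]; simp⟩

-- `diag(u, u⁻¹) = w(u) w(-1)` with the Weyl elements `w(u) = E₁₂(u) E₂₁(-u⁻¹) E₁₂(u)`.
lemma diagUnit_eq (u : Aˣ) :
    diagUnit A u = E12 A u * E21 A (-(↑u⁻¹ : A)) * E12 A u *
      (E12 A (-1) * E21 A 1 * E12 A (-1)) := by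
  ext : 1
  simp [diagUnit, E12, E21]

lemma diagUnit_mem (u : Aˣ) : diagUnit A u ∈ EE2 A := by
  rw [diagUnit_eq]
  refine mul_mem (mul_mem (mul_mem ?_ ?_) ?_) (mul_mem (mul_mem ?_ ?_) ?_) <;>
    first | exact E12_mem _ | exact E21_mem _

lemma commutatorElement_diagUnit_E12 (u : Aˣ) (b : A) :
    ⁅diagUnit A u, E12 A b⁆ = E12 A (((u : A) ^ 2 - 1) * b) := by
  ext : 1
  simp [commutatorElement_def, diagUnit, E12]
  ring

lemma commutatorElement_diagUnit_inv_E21 (u : Aˣ) (b : A) :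
    ⁅diagUnit A u⁻¹, E21 A b⁆ = E21 A (((u : A) ^ 2 - 1) * b) := by
  ext : 1
  simp [commutatorElement_def, diagUnit, E21]
  ring

lemma E12_mem_commutator {u : Aˣ} (hu : IsUnit ((u : A) ^ 2 - 1)) (a : A) :
    E12 A a ∈ ⁅EE2 A, EE2 A⁆ := by
  obtain ⟨w, hw⟩ := hu
  have h : E12 A a = ⁅diagUnit A u, E12 A (↑w⁻¹ * a)⁆ := by
    rw [commutatorElement_diagUnit_E12, ← hw, ← mul_assoc, Units.mul_inv, one_mul]
  rw [h]
  exact Subgroup.commutator_mem_commutator (diagUnit_mem u) (E12_mem _)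

lemma E21_mem_commutator {u : Aˣ} (hu : IsUnit ((u : A) ^ 2 - 1)) (a : A) :
    E21 A a ∈ ⁅EE2 A, EE2 A⁆ := by
  obtain ⟨w, hw⟩ := hu
  have h : E21 A a = ⁅diagUnit A u⁻¹, E21 A (↑w⁻¹ * a)⁆ := by
    rw [commutatorElement_diagUnit_inv_E21, ← hw, ← mul_assoc, Units.mul_inv, one_mul]
  rw [h]
  exact Subgroup.commutator_mem_commutator (diagUnit_mem u⁻¹) (E21_mem _)

variable (A)

/-- If `A` is a semilocal ring all of whose residue fields have more than
three elements, then `H₁(E₂(A), ℤ) = 0`, i.e. `E₂(A)` is perfect. -/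
theorem h1_E2_of_semilocal_residue_gt_three
    (A : Type*) [CommRing A]
    (hsemi : {I : Ideal A | I.IsMaximal}.Finite)
    (hres : ∀ I : Ideal A, I.IsMaximal → 3 < Cardinal.mk (A ⧸ I)) :
    Subsingleton (Abelianization ↥(EE2 A)) := by
  obtain ⟨u, hu⟩ := exists_unit_isUnit_sq_sub_one hsemi hres
  have : Group.IsPerfect (EE2 A) := Subgroup.isPerfect_closure_of_subset_commutator <| by
    rintro _ (⟨a, rfl⟩ | ⟨a, rfl⟩)
    exacts [E12_mem_commutator hu a, E21_mem_commutator hu a]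
  exact Abelianization.subsingleton_of_isPerfect
end

section
/- Let A be a semilocal commutative ring such that for every maximal ideal m of A the residue field A/m has more than three elements. Then there exists a unit a ∈ A^× such that a² − 1 ∈ A^×. -/
/-- If `A` is a semilocal ring all of whose residue fields have more than
three elements, then there exists a unit `a ∈ A^×` with `a² − 1 ∈ A^×`. -/
theorem exists_unit_sq_sub_one_unit_of_semilocal
    (A : Type*) [CommRing A]
    (hsemi : {I : Ideal A | I.IsMaximal}.Finite)
    (hres : ∀ I : Ideal A, I.IsMaximal → 3 < Cardinal.mk (A ⧸ I)) :
    ∃ a : Aˣ, IsUnit ((a : A) ^ 2 - 1) := by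
  classical
  -- Step 1: in each residue field choose an element ≠ 0, 1, -1.
  have key : ∀ I : Ideal A, I.IsMaximal → ∃ x : A ⧸ I, x ≠ 0 ∧ x ≠ 1 ∧ x ≠ -1 := by
    intro I hI
    by_contra h
    push_neg at h
    have hsurj : Function.Surjective (fun i : ULift.{_} (Fin 3) => (![0, 1, -1] i.down : A ⧸ I)) := by
      intro x
      by_cases h0 : x = 0
      · exact ⟨⟨0⟩, by simp [h0]⟩
      by_cases h1 : x = 1
      · exact ⟨⟨1⟩, by simp [h1]⟩
      · exact ⟨⟨2⟩, by simp [h x h0 h1]⟩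
    have hle := Cardinal.mk_le_of_surjective hsurj
    simp only [Cardinal.mk_uLift, Cardinal.mk_fin, Nat.cast_ofNat, Cardinal.lift_ofNat] at hle
    exact absurd (hres I hI) (not_lt.2 hle)
  -- Step 2: CRT over the finitely many maximal ideals.
  haveI : Fintype {I : Ideal A | I.IsMaximal} := hsemi.fintype
  set ι := {I : Ideal A | I.IsMaximal}
  have hcop : Pairwise fun i j : ι => IsCoprime (i.1 : Ideal A) (j.1 : Ideal A) := by
    intro i j hij
    exact (Ideal.isCoprime_iff_sup_eq).2 <| Ideal.IsMaximal.coprime_of_ne i.2 j.2 (fun h => hij (Subtype.ext h))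
  choose x hx0 hx1 hxm1 using fun i : ι => key i.1 i.2
  obtain ⟨r, hr⟩ := Ideal.pi_quotient_surjective hcop x
  -- r avoids every maximal ideal, as do r - 1 and r + 1.
  have hunit : ∀ b : A, (∀ i : ι, (Ideal.Quotient.mk (i.1 : Ideal A)) b ≠ 0) → IsUnit b := by
    intro b hb
    by_contra hnb
    obtain ⟨M, hM, hbM⟩ := exists_max_ideal_of_mem_nonunits hnb
    exact hb ⟨M, hM⟩ (Ideal.Quotient.eq_zero_iff_mem.2 hbM)
  have hru : IsUnit r := hunit r fun i => by rw [hr i]; exact hx0 i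
  have hr1 : IsUnit (r - 1) := by
    refine hunit _ fun i => ?_
    rw [map_sub, map_one, hr i, sub_ne_zero]
    exact hx1 i
  have hr2 : IsUnit (r + 1) := by
    refine hunit _ fun i => ?_
    rw [map_add, map_one, ← sub_neg_eq_add, sub_ne_zero, hr i]
    exact hxm1 i
  refine ⟨hru.unit, ?_⟩
  have : ((hru.unit : A) ^ 2 - 1) = (r - 1) * (r + 1) := by
    simp [IsUnit.unit_spec]; ring
  rw [this]
  exact hr1.mul hr2
end

section
/- Let A be a commutative ring and let a, b ∈ A^× be such that a, b and a/b all lie in W_A. Set u := (1−a⁻¹)/(1−b⁻¹) and v := (1−a)/(1−b) (all the elements a, 1−a, b, 1−b, b/a, 1−b/a, u, 1−u, v, 1−v are then units of A). Then in the group ring ℤ[G_A] the following identity holds: ⟨⟨a⟩⟩⟨⟨1−a⟩⟩ − ⟨⟨b⟩⟩⟨⟨1−b⟩⟩ + ⟨a⟩·⟨⟨b/a⟩⟩⟨⟨1−b/a⟩⟩ − ⟨a⁻¹−1⟩·⟨⟨u⟩⟩⟨⟨1−u⟩⟩ + ⟨1−a⟩·⟨⟨v⟩⟩⟨⟨1−v⟩⟩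 = 0. (This is the well-definedness of the map λ̄₁ : RP̄(A) → I_A², [a] ↦ ⟨⟨a⟩⟩⟨⟨1−a⟩⟩.) -/
variable (A : Type*) [CommRing A]

/-- `⟨⟨a⟩⟩ := ⟨a⟩ − 1` in the group ring `ℤ[G_A]`. -/
noncomputable def LL (a : Aˣ) : MonoidAlgebra ℤ (GA A) := MonoidAlgebra.of ℤ (GA A) (cls A a) - 1

lemma five_term_aux {R : Type*} [CommRing R] (X Y Z W T : R)
    (hX : X * X = 1) (hY : Y * Y = 1) (hW : W * W = 1) :
    (X - 1) * (Y - 1) - (Z - 1) * (W - 1)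
      + X * ((X * Z - 1) * (T - 1))
      - X * Y * ((X * Y * (Z * W) - 1) * (T * W - 1))
      + Y * ((Y * W - 1) * (X * T * W - 1)) = 0 := by
  linear_combination (-Z + Z*T + Y*Y*Z*W - Y*Y*Z*W*W*T) * hX
    + (-W + Z*W - Z*W*W*T + X*W*W*T) * hY + (-Z*T + X*T) * hW

/-- The five-term relation for `λ̄₁ : RP̄(A) → I_A²`: for `a, b ∈ A^×`
with `a, b, a/b ∈ W_A`, and with `u = (1−a⁻¹)/(1−b⁻¹)`, `v = (1−a)/(1−b)`,
`⟨⟨a⟩⟩⟨⟨1−a⟩⟩ − ⟨⟨b⟩⟩⟨⟨1−b⟩⟩ + ⟨a⟩⟨⟨b/a⟩⟩⟨⟨1−b/a⟩⟩ − ⟨a⁻¹−1⟩⟨⟨u⟩⟩⟨⟨1−u⟩⟩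
  + ⟨1−a⟩⟨⟨v⟩⟩⟨⟨1−v⟩⟩ = 0` in `ℤ[G_A]`. -/
theorem five_term_relation_lambda1
    (A : Type*) [CommRing A] (a b : Aˣ)
    (ha : IsUnit ((a : A) * (1 - (a : A))))
    (hb : IsUnit ((b : A) * (1 - (b : A))))
    (hab : IsUnit (((a * b⁻¹ : Aˣ) : A) * (1 - ((a * b⁻¹ : Aˣ) : A))))
    (a1 : Aˣ) (ha1 : (a1 : A) = 1 - (a : A))
    (b1 : Aˣ) (hb1 : (b1 : A) = 1 - (b : A))
    (q1 : Aˣ) (hq1 : (q1 : A) = 1 - ((b * a⁻¹ : Aˣ) : A))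
    (w1 : Aˣ) (hw1 : (w1 : A) = ((a⁻¹ : Aˣ) : A) - 1)
    (u : Aˣ) (hu : (u : A) * (1 - ((b⁻¹ : Aˣ) : A)) = 1 - ((a⁻¹ : Aˣ) : A))
    (u1 : Aˣ) (hu1 : (u1 : A) = 1 - (u : A))
    (v : Aˣ) (hv : (v : A) * (1 - (b : A)) = 1 - (a : A))
    (v1 : Aˣ) (hv1 : (v1 : A) = 1 - (v : A)) :
    LL A a * LL A a1 - LL A b * LL A b1
      + MonoidAlgebra.of ℤ (GA A) (cls A a) * (LL A (b * a⁻¹) * LL A q1)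
      - MonoidAlgebra.of ℤ (GA A) (cls A w1) * (LL A u * LL A u1)
      + MonoidAlgebra.of ℤ (GA A) (cls A a1) * (LL A v * LL A v1) = 0 := by
  -- the quotient map as a monoid hom
  set c : Aˣ →* GA A := QuotientGroup.mk' (powMonoidHom 2 : Aˣ →* Aˣ).range with hc
  have hcls : ∀ x : Aˣ, cls A x = c x := fun x => rfl
  -- every class squares to 1
  have hsq : ∀ x : Aˣ, c x * c x = 1 := by
    intro x
    rw [← map_mul]
    exact (QuotientGroup.eq_one_iff _).2 ⟨x, by simp [powMonoidHom, sq]⟩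
  have hinv : ∀ x : Aˣ, c x⁻¹ = c x := by
    intro x
    rw [map_inv]
    exact inv_eq_of_mul_eq_one_right (hsq x)
  -- coercion facts
  have haa : (a : A) * ((a⁻¹ : Aˣ) : A) = 1 := a.mul_inv
  have hbb : (b : A) * ((b⁻¹ : Aˣ) : A) = 1 := b.mul_inv
  -- unit identities
  have E1 : v * b1 = a1 := by
    ext; push_cast; rw [ha1, hb1]; linear_combination hv
  have E2 : u * b1 * a = a1 * b := by
    ext; push_cast
    rw [ha1, hb1]
    linear_combination (-(a:A) * (b:A)) * hu + (-(u:A) * (a:A)) * hbb + (b:A) * haa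
  have E3 : u1 * b1 = q1 := by
    ext; push_cast
    rw [hu1, hb1, hq1]
    push_cast
    linear_combination (b:A) * hu + (u:A) * hbb
  have E4 : v1 * b1 = a * q1 := by
    ext; push_cast
    rw [hv1, hb1, hq1]
    push_cast
    linear_combination (-1 : A) * hv + (b:A) * haa
  have E5 : w1 * a = a1 := by
    ext; push_cast
    rw [hw1, ha1]
    linear_combination haa
  -- turning unit identities into class identities
  have key : ∀ x y z : Aˣ, x * y = z → c x = c z * c y := by
    intro x y z h
    calc c x = c x * (c y * c y) := by rw [hsq, mul_one]
      _ = (c x * c y) * c y := by rw [mul_assoc]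
      _ = c z * c y := by rw [← map_mul, h]
  have Cv : c v = c a1 * c b1 := key v b1 a1 E1
  have Cu : c u = c a1 * c b * (c b1 * c a) := by
    have := key u (b1 * a) (a1 * b) (by rw [← mul_assoc]; exact E2)
    simpa [map_mul] using this
  have Cu1 : c u1 = c q1 * c b1 := key u1 b1 q1 E3
  have Cv1 : c v1 = c a * c q1 * c b1 := by
    have := key v1 b1 (a * q1) E4
    simpa [map_mul, mul_assoc] using this
  have Cw1 : c w1 = c a1 * c a := key w1 a a1 E5
  have Cba : c (b * a⁻¹) = c b * c a := by rw [map_mul, hinv]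
  -- pass to the monoid algebra
  set F := MonoidAlgebra.of ℤ (GA A) with hF
  set X := F (c a) with hXd
  set Y := F (c a1) with hYd
  set Z := F (c b) with hZd
  set W := F (c b1) with hWd
  set T := F (c q1) with hTd
  have hX : X * X = 1 := by rw [hXd, ← map_mul, hsq, map_one]
  have hY : Y * Y = 1 := by rw [hYd, ← map_mul, hsq, map_one]
  have hW : W * W = 1 := by rw [hWd, ← map_mul, hsq, map_one]
  simp only [LL, hcls, Cv, Cu, Cu1, Cv1, Cw1, Cba, map_mul, ← hF, ← hXd, ← hYd, ← hZd,
    ← hWd, ← hTd]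
  linear_combination (-Z + Z*T + Y*Y*Z*W - Y*Y*Z*W*W*T) * hX
    + (-W + Z*W - Z*W*W*T + X*W*W*T) * hY + (-Z*T + X*T) * hW
end

section
/- Let A be a commutative ring and let a, b ∈ A^× be such that a, b and a/b all lie in W_A. Set u := (1−a⁻¹)/(1−b⁻¹) and v := (1−a)/(1−b). Then in S²_ℤ(A^×) the following identity holds: a⊗(1−a) − b⊗(1−b) + (b/a)⊗(1−b/a) − u⊗(1−u) + v⊗(1−v) = 0. (This is the well-definedness of the map λ̄₂ : RP̄(A) → S²_ℤ(A^×), [a] ↦ a ⊗ (1−a), as a ℤ[G_A]-homomorphism for the trivial G_A-action on S²_ℤ(A^×).) -/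
/-!
Put `d := a - b`, a unit because `1 - b/a = d/a`. Each of the ten entries of the five tensors
is a monomial in the units `a, b, 1 - a, 1 - b, d`:
`1 - b/a = d/a`, `u = (1 - a) b / (a (1 - b))`, `1 - u = d / (a (1 - b))`,
`v = (1 - a)/(1 - b)`, `1 - v = d/(1 - b)`.
Expanding bilinearly, the antisymmetry of `S²_ℤ(A^×)` cancels all terms.
-/

open scoped TensorProduct

variable (A : Type*) [CommRing A]

/-- `S²_ℤ(A^×) := (A^× ⊗_ℤ A^×)/⟨a⊗b + b⊗a⟩`. -/
def S2units : Type _ :=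
  (Additive Aˣ ⊗[ℤ] Additive Aˣ) ⧸
    Submodule.span ℤ {x : Additive Aˣ ⊗[ℤ] Additive Aˣ |
      ∃ s t : Aˣ, x = Additive.ofMul s ⊗ₜ[ℤ] Additive.ofMul t
        + Additive.ofMul t ⊗ₜ[ℤ] Additive.ofMul s}

noncomputable instance : AddCommGroup (S2units A) := by unfold S2units; infer_instance

/-- The class of `s ⊗ t` in `S²_ℤ(A^×)`. -/
noncomputable def s2mk (s t : Aˣ) : S2units A :=
  Submodule.Quotient.mk (Additive.ofMul s ⊗ₜ[ℤ] Additive.ofMul t)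

section S2units

variable {A}

lemma s2mk_mul_left (s t r : Aˣ) : s2mk A (s * t) r = s2mk A s r + s2mk A t r := by
  rw [s2mk, ofMul_mul, TensorProduct.add_tmul, Submodule.Quotient.mk_add]; rfl

lemma s2mk_mul_right (r s t : Aˣ) : s2mk A r (s * t) = s2mk A r s + s2mk A r t := by
  rw [s2mk, ofMul_mul, TensorProduct.tmul_add, Submodule.Quotient.mk_add]; rfl

lemma s2mk_inv_left (s r : Aˣ) : s2mk A s⁻¹ r = -s2mk A s r := by
  rw [s2mk, ofMul_inv, TensorProduct.neg_tmul, Submodule.Quotient.mk_neg]; rfl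

lemma s2mk_inv_right (r s : Aˣ) : s2mk A r s⁻¹ = -s2mk A r s := by
  rw [s2mk, ofMul_inv, TensorProduct.tmul_neg, Submodule.Quotient.mk_neg]; rfl

lemma s2mk_swap (s t : Aˣ) : s2mk A t s = -s2mk A s t := by
  refine eq_neg_of_add_eq_zero_right <|
    (Submodule.Quotient.mk_add _).symm.trans ((Submodule.Quotient.mk_eq_zero _).mpr ?_)
  exact Submodule.subset_span ⟨s, t, rfl⟩

lemma s2mk_five_term_monomials (a b a₁ b₁ d : Aˣ) :
    s2mk A a a₁ - s2mk A b b₁ + s2mk A (b * a⁻¹) (d * a⁻¹)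
      - s2mk A (a₁ * b * (a * b₁)⁻¹) (d * (a * b₁)⁻¹)
      + s2mk A (a₁ * b₁⁻¹) (d * b₁⁻¹) = 0 := by
  simp only [mul_inv, s2mk_mul_left, s2mk_mul_right, s2mk_inv_left, s2mk_inv_right]
  rw [s2mk_swap a a₁, s2mk_swap a b₁]
  abel

end S2units

lemma Units.eq_mul_inv_of_val_mul_eq {M : Type*} [Monoid M] {x y z : Mˣ}
    (h : (x : M) * y = z) : x = z * y⁻¹ :=
  _root_.eq_mul_inv_iff_mul_eq.mpr (Units.ext h)

theorem five_term_relation_lambda2_general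
    (A : Type*) [CommRing A] (a b : Aˣ)
    (a1 : Aˣ) (ha1 : (a1 : A) = 1 - (a : A))
    (b1 : Aˣ) (hb1 : (b1 : A) = 1 - (b : A))
    (q1 : Aˣ) (hq1 : (q1 : A) = 1 - ((b * a⁻¹ : Aˣ) : A))
    (u : Aˣ) (hu : (u : A) * (1 - ((b⁻¹ : Aˣ) : A)) = 1 - ((a⁻¹ : Aˣ) : A))
    (u1 : Aˣ) (hu1 : (u1 : A) = 1 - (u : A))
    (v : Aˣ) (hv : (v : A) * (1 - (b : A)) = 1 - (a : A))
    (v1 : Aˣ) (hv1 : (v1 : A) = 1 - (v : A)) :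
    s2mk A a a1 - s2mk A b b1 + s2mk A (b * a⁻¹) q1 - s2mk A u u1 + s2mk A v v1 = 0 := by
  have hainv : ((a⁻¹ : Aˣ) : A) * a = 1 := a.inv_mul
  have hbinv : ((b⁻¹ : Aˣ) : A) * b = 1 := b.inv_mul
  set d := q1 * a
  have hd : (d : A) = a - b := by
    rw [Units.val_mul, hq1, Units.val_mul]
    linear_combination (-(b : A)) * hainv
  have hq1' : q1 = d * a⁻¹ := (mul_inv_cancel_right q1 a).symm
  have hu' : u = a1 * b * (a * b1)⁻¹ := Units.eq_mul_inv_of_val_mul_eq <| by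
    push_cast [ha1, hb1]
    linear_combination (-(a : A) * b) * hu - ((u : A) * a) * hbinv + (b : A) * hainv
  have hu1' : u1 = d * (a * b1)⁻¹ := Units.eq_mul_inv_of_val_mul_eq <| by
    push_cast [hu1, hb1, hd]
    linear_combination ((a : A) * b) * hu + ((u : A) * a) * hbinv - (b : A) * hainv
  have hv' : v = a1 * b1⁻¹ := Units.eq_mul_inv_of_val_mul_eq <| by
    rw [ha1, hb1]; exact hv
  have hv1' : v1 = d * b1⁻¹ := Units.eq_mul_inv_of_val_mul_eq <| by
    rw [hv1, hb1, hd]; linear_combination -hv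
  rw [hq1', hu', hu1', hv', hv1']
  exact s2mk_five_term_monomials a b a1 b1 d

/-- The five-term relation for `λ̄₂ : RP̄(A) → S²_ℤ(A^×)`: for
`a, b ∈ A^×` with `a, b, a/b ∈ W_A`, and `u = (1−a⁻¹)/(1−b⁻¹)`, `v = (1−a)/(1−b)`,
`a⊗(1−a) − b⊗(1−b) + (b/a)⊗(1−b/a) − u⊗(1−u) + v⊗(1−v) = 0` in `S²_ℤ(A^×)`. -/
theorem five_term_relation_lambda2
    (A : Type*) [CommRing A] (a b : Aˣ)
    (ha : IsUnit ((a : A) * (1 - (a : A))))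
    (hb : IsUnit ((b : A) * (1 - (b : A))))
    (hab : IsUnit (((a * b⁻¹ : Aˣ) : A) * (1 - ((a * b⁻¹ : Aˣ) : A))))
    (a1 : Aˣ) (ha1 : (a1 : A) = 1 - (a : A))
    (b1 : Aˣ) (hb1 : (b1 : A) = 1 - (b : A))
    (q1 : Aˣ) (hq1 : (q1 : A) = 1 - ((b * a⁻¹ : Aˣ) : A))
    (u : Aˣ) (hu : (u : A) * (1 - ((b⁻¹ : Aˣ) : A)) = 1 - ((a⁻¹ : Aˣ) : A))
    (u1 : Aˣ) (hu1 : (u1 : A) = 1 - (u : A))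
    (v : Aˣ) (hv : (v : A) * (1 - (b : A)) = 1 - (a : A))
    (v1 : Aˣ) (hv1 : (v1 : A) = 1 - (v : A)) :
    s2mk A a a1 - s2mk A b b1 + s2mk A (b * a⁻¹) q1 - s2mk A u u1 + s2mk A v v1 = 0 :=
  five_term_relation_lambda2_general A a b a1 ha1 b1 hb1 q1 hq1 u hu u1 hu1 v hv v1 hv1
end

section
/- For any commutative ring A, the center of GE₂(A) is exactly the set of scalar matrices u·I₂ with u ∈ A^×. -/
open Matrix

variable (A : Type*) [CommRing A]

variable {A}

variable (A)



lemma E12_mem_GE2 {A : Type*} [CommRing A] (a : A) : E12 A a ∈ GE2 A :=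
  Subgroup.subset_closure (Or.inl (Or.inl ⟨a, rfl⟩))

lemma E21_mem_GE2 {A : Type*} [CommRing A] (a : A) : E21 A a ∈ GE2 A :=
  Subgroup.subset_closure (Or.inl (Or.inr ⟨a, rfl⟩))

/-- The center of `GE₂(A)` consists exactly of the scalar matrices
`u·I₂`, `u ∈ A^×`. -/
theorem center_GE2 (A : Type*) [CommRing A] :
    ∀ g : ↥(GE2 A), g ∈ Subgroup.center ↥(GE2 A) ↔
      ∃ u : Aˣ, ((g : GL (Fin 2) A) : Matrix (Fin 2) (Fin 2) A) =
        (u : A) • (1 : Matrix (Fin 2) (Fin 2) A) := by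
  intro g
  constructor
  · intro hg
    rw [Subgroup.mem_center_iff] at hg
    set M : Matrix (Fin 2) (Fin 2) A := ((g : GL (Fin 2) A) : Matrix (Fin 2) (Fin 2) A) with hM
    have h1 := hg ⟨E12 A 1, E12_mem_GE2 1⟩
    have h2 := hg ⟨E21 A 1, E21_mem_GE2 1⟩
    have h1' : (E12 A 1 : Matrix (Fin 2) (Fin 2) A) * M = M * (E12 A 1 : Matrix (Fin 2) (Fin 2) A) := by
      have := congrArg (fun x : ↥(GE2 A) => ((x : GL (Fin 2) A) : Matrix (Fin 2) (Fin 2) A)) h1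
      simpa using this
    have h2' : (E21 A 1 : Matrix (Fin 2) (Fin 2) A) * M = M * (E21 A 1 : Matrix (Fin 2) (Fin 2) A) := by
      have := congrArg (fun x : ↥(GE2 A) => ((x : GL (Fin 2) A) : Matrix (Fin 2) (Fin 2) A)) h2
      simpa using this
    have e00 := congrFun (congrFun h1' 0) 0
    have e01 := congrFun (congrFun h1' 0) 1
    have f11 := congrFun (congrFun h2' 1) 1
    simp [E12, E21, Matrix.mul_apply, Fin.sum_univ_two] at e00 e01 f11
    -- from these: M 1 0 = 0, M 0 1 = 0, M 0 0 = M 1 1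
    have hc : M 1 0 = 0 := by linear_combination e00
    have hb : M 0 1 = 0 := by linear_combination f11
    have hd : M 1 1 = M 0 0 := by linear_combination e01
    -- M 0 0 is a unit since det M is a unit
    have hdet : IsUnit (M.det) := by
      rw [hM]
      exact (Matrix.isUnit_iff_isUnit_det _).mp (Units.isUnit _)
    have hdet2 : M.det = M 0 0 * M 0 0 := by
      rw [Matrix.det_fin_two, hb, hc, hd]; ring
    have hu : IsUnit (M 0 0) := by
      rw [hdet2] at hdet
      exact isUnit_of_mul_isUnit_left hdet
    obtain ⟨u, hu'⟩ := hu
    refine ⟨u, ?_⟩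
    rw [Matrix.eta_fin_two M, hb, hc, hd, hu', Matrix.smul_one_eq_diagonal]
    ext i j
    fin_cases i <;> fin_cases j <;> simp [Matrix.diagonal]
  · rintro ⟨u, hu⟩
    rw [Subgroup.mem_center_iff]
    intro h
    have key : ((g : GL (Fin 2) A) : Matrix (Fin 2) (Fin 2) A) * ((h : GL (Fin 2) A) : Matrix (Fin 2) (Fin 2) A)
        = ((h : GL (Fin 2) A) : Matrix (Fin 2) (Fin 2) A) * ((g : GL (Fin 2) A) : Matrix (Fin 2) (Fin 2) A) := by
      rw [hu, Matrix.smul_mul, Matrix.mul_smul, Matrix.one_mul, Matrix.mul_one]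
    exact Subtype.ext (Units.ext key.symm)
end
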